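/- arXiv:2211.12467 — 6 statements merged into one kernel-verified Lean document; each statement's English description precedes it below -/
import Mathlib

section
/- There exist a constant C > 0 and x₀ such that for all real x ≥ x₀ and all real c with 0 < c ≤ 1, one has #{n ≤ x : t_n ≤ x^c} ≤ #{n ≤ x : P⁺(n) ≤ x^c} + C·x·exp(−√(log x)), uniformly in c. -/
/-!
If `tn n ≤ y < P⁺(n)`, every prime `p > y` divides `n` to an even power: a prime `p > tn n`
dividing `n` divides none of `n + 1, …, n + tn n`, so its exponent in the square `n * ∏ S` is
its exponent in `n`. Such `n` are divisible by `p ^ 2` for some `p > y`, and they are a square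
times a `y`-smooth number. Put `u = √(log x)`. If `y ≥ exp u`, the first property leaves at
most `2x / y ≤ 2x exp (-u)` of them. If `y ≤ exp u`, Rankin's trick with `σ = 1 - 2 / u`
bounds their number by `x ^ σ ∏_{p ≤ y} (1 + p ^ (-σ)) ≤ x exp (-2u) exp (e² ∑_{p ≤ y} 1 / p)`,
which is at most `x exp (-u)` because Chebyshev's bound `θ(t) ≤ t log 4`, applied on dyadic
blocks, gives `∑_{p ≤ y} 1 / p = O(log u)`.
-/

/-- `tn n` is the least nonnegative integer `t` such that there is a (possibly empty)
subset `S` of `{n+1, ..., n+t}` with `n * ∏_{m ∈ S} m` a perfect square. -/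
noncomputable def tn (n : ℕ) : ℕ :=
  sInf {t : ℕ | ∃ S ⊆ Finset.Icc (n + 1) (n + t), IsSquare (n * ∏ m ∈ S, m)}

/-- `Pplus n` is the largest prime factor of `n`, with `Pplus 1 = 1`. -/
def Pplus (n : ℕ) : ℕ := n.primeFactors.max.unbotD 1

open Finset Real
open scoped Classical
open Nat (primesLE)

def HasEvenValuationAbove (T n : ℕ) : Prop :=
  ∀ p, p.Prime → T < p → Even (n.factorization p)

theorem HasEvenValuationAbove.mono {T T' n : ℕ} (h : HasEvenValuationAbove T n) (hT : T ≤ T') :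
    HasEvenValuationAbove T' n :=
  fun p hp hTp ↦ h p hp (hT.trans_lt hTp)

theorem Nat.even_factorization_of_isSquare {n : ℕ} (h : IsSquare n) (p : ℕ) :
    Even (n.factorization p) := by
  obtain ⟨r, rfl⟩ := h
  rcases eq_or_ne r 0 with rfl | hr
  · simp
  · rw [Nat.factorization_mul hr hr]
    exact ⟨_, rfl⟩

theorem exists_subset_isSquare_tn {n : ℕ} (hn : 0 < n) :
    ∃ S ⊆ Icc (n + 1) (n + tn n), IsSquare (n * ∏ m ∈ S, m) := by
  refine Nat.sInf_mem (s := {t | ∃ S ⊆ Icc (n + 1) (n + t), IsSquare (n * ∏ m ∈ S, m)})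
    ⟨3 * n, {4 * n}, ?_, 2 * n, ?_⟩
  · simp only [singleton_subset_iff, mem_Icc]
    omega
  · rw [prod_singleton]
    ring

theorem hasEvenValuationAbove_tn {n : ℕ} (hn : 0 < n) : HasEvenValuationAbove (tn n) n := by
  intro p hp hlt
  by_cases hpn : p ∣ n
  swap
  · simp [Nat.factorization_eq_zero_of_not_dvd hpn]
  obtain ⟨S, hS, hsq⟩ := exists_subset_isSquare_tn hn
  have hS0 : ∀ m ∈ S, m ≠ 0 := fun m hm ↦ by
    have := mem_Icc.mp (hS hm)
    omega
  have hpS : ¬ p ∣ ∏ m ∈ S, m := by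
    intro hd
    obtain ⟨m, hm, hpm⟩ := hp.prime.exists_mem_finset_dvd hd
    have hmS := mem_Icc.mp (hS hm)
    have := Nat.le_of_dvd (by omega) (Nat.dvd_sub hpm hpn)
    omega
  have := Nat.even_factorization_of_isSquare hsq p
  rwa [Nat.factorization_mul hn.ne' (prod_ne_zero_iff.mpr hS0), Finsupp.add_apply,
    Nat.factorization_eq_zero_of_not_dvd hpS, add_zero] at this

theorem Pplus_mem_primeFactors {n : ℕ} (h : 1 < Pplus n) : Pplus n ∈ n.primeFactors := by
  rcases n.primeFactors.eq_empty_or_nonempty with hn | hn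
  · simp [Pplus, hn] at h
  · obtain ⟨p, hp⟩ := max_of_nonempty hn
    rw [Pplus, hp]
    exact mem_of_max hp

theorem HasEvenValuationAbove.sq_dvd {T n p : ℕ} (h : HasEvenValuationAbove T n) (hn : n ≠ 0)
    (hp : p.Prime) (hTp : T < p) (hpn : p ∣ n) : p ^ 2 ∣ n := by
  rw [hp.pow_dvd_iff_le_factorization hn]
  have hpos : 0 < n.factorization p := hp.factorization_pos_of_dvd hn hpn
  obtain ⟨k, hk⟩ := h p hp hTp
  omega

theorem ncard_tn_le_ncard_Pplus_add_card {x y : ℝ} (hy : 1 ≤ y) :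
    ({n : ℕ | 0 < n ∧ (n : ℝ) ≤ x ∧ (tn n : ℝ) ≤ y}.ncard : ℝ)
      ≤ {n : ℕ | 0 < n ∧ (n : ℝ) ≤ x ∧ (Pplus n : ℝ) ≤ y}.ncard
        + #{n ∈ Icc 1 ⌊x⌋₊ | HasEvenValuationAbove ⌊y⌋₊ n ∧ ∃ p, ⌊y⌋₊ < p ∧ p ^ 2 ∣ n} := by
  set E := {n ∈ Icc 1 ⌊x⌋₊ | HasEvenValuationAbove ⌊y⌋₊ n ∧ ∃ p, ⌊y⌋₊ < p ∧ p ^ 2 ∣ n}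
  have hsub : {n : ℕ | 0 < n ∧ (n : ℝ) ≤ x ∧ (tn n : ℝ) ≤ y}
      ⊆ {n : ℕ | 0 < n ∧ (n : ℝ) ≤ x ∧ (Pplus n : ℝ) ≤ y} ∪ E := by
    rintro n ⟨hn, hnx, htn⟩
    by_cases hP : (Pplus n : ℝ) ≤ y
    · exact Or.inl ⟨hn, hnx, hP⟩
    have hyP : ⌊y⌋₊ < Pplus n := (Nat.floor_lt (by linarith)).mpr (not_le.mp hP)
    have hPmem := Pplus_mem_primeFactors (by exact_mod_cast hy.trans_lt (not_le.mp hP))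
    have hEven : HasEvenValuationAbove ⌊y⌋₊ n :=
      (hasEvenValuationAbove_tn hn).mono (Nat.le_floor htn)
    have hsq := hEven.sq_dvd hn.ne' (Nat.prime_of_mem_primeFactors hPmem) hyP
      (Nat.dvd_of_mem_primeFactors hPmem)
    exact Or.inr (mem_coe.mpr (mem_filter.mpr
      ⟨mem_Icc.mpr ⟨hn, Nat.le_floor hnx⟩, hEven, _, hyP, hsq⟩))
  have hfin : {n : ℕ | 0 < n ∧ (n : ℝ) ≤ x ∧ (Pplus n : ℝ) ≤ y}.Finite :=
    (Icc 1 ⌊x⌋₊).finite_toSet.subset fun n hn ↦ mem_Icc.mpr ⟨hn.1, Nat.le_floor hn.2.1⟩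
  have := (Set.ncard_le_ncard hsub (hfin.union E.finite_toSet)).trans (Set.ncard_union_le _ _)
  rw [Set.ncard_coe_finset] at this
  exact_mod_cast this

theorem card_filter_exists_sq_dvd_le (N T : ℕ) :
    (#{n ∈ Icc 1 N | ∃ p, T < p ∧ p ^ 2 ∣ n} : ℝ) ≤ 2 * N / (T + 1) := by
  have hsub : {n ∈ Icc 1 N | ∃ p, T < p ∧ p ^ 2 ∣ n}
      ⊆ (Ioo T (N + 1)).biUnion fun k ↦ {n ∈ Ioc 0 N | k ^ 2 ∣ n} := by
    intro n hn
    obtain ⟨hnN, p, hTp, hpn⟩ := mem_filter.mp hn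
    have hn := mem_Icc.mp hnN
    have hpN : p ≤ N :=
      (Nat.le_self_pow two_ne_zero p).trans ((Nat.le_of_dvd hn.1 hpn).trans hn.2)
    exact mem_biUnion.mpr ⟨p, mem_Ioo.mpr ⟨hTp, by omega⟩, mem_filter.mpr ⟨hnN, hpn⟩⟩
  calc (#{n ∈ Icc 1 N | ∃ p, T < p ∧ p ^ 2 ∣ n} : ℝ)
      ≤ ∑ k ∈ Ioo T (N + 1), (#{n ∈ Ioc 0 N | k ^ 2 ∣ n} : ℝ) :=
        mod_cast (card_le_card hsub).trans card_biUnion_le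
    _ ≤ ∑ k ∈ Ioo T (N + 1), N * ((k : ℝ) ^ 2)⁻¹ := by
        gcongr with k
        rw [Nat.Ioc_filter_dvd_card_eq_div, ← div_eq_mul_inv]
        exact_mod_cast Nat.cast_div_le
    _ ≤ N * (2 / (T + 1)) := by
        rw [← mul_sum]
        gcongr
        exact sum_Ioo_inv_sq_le T (N + 1)
    _ = 2 * N / (T + 1) := by ring

theorem HasEvenValuationAbove.exists_eq_sq_mul_prod {T n : ℕ} (h : HasEvenValuationAbove T n)
    (hn : n ≠ 0) : ∃ s ⊆ primesLE T, ∃ m, n = m ^ 2 * ∏ p ∈ s, p := by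
  obtain ⟨l, m, rfl, hl⟩ := Nat.sq_mul_squarefree n
  have hm : m ^ 2 ≠ 0 := left_ne_zero_of_mul hn
  have hl0 : l ≠ 0 := right_ne_zero_of_mul hn
  refine ⟨l.primeFactors, fun p hp ↦ ?_, m, by rw [Nat.prod_primeFactors_of_squarefree hl]⟩
  have hpp := Nat.prime_of_mem_primeFactors hp
  refine Nat.mem_primesLE.mpr ⟨not_lt.mp fun hTp ↦ ?_, hpp⟩
  have := h p hpp hTp
  rw [Nat.factorization_mul hm hl0, Finsupp.add_apply, Nat.factorization_pow,
    Nat.factorization_eq_one_of_squarefree hl hpp (Nat.dvd_of_mem_primeFactors hp)] at this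
  simp [parity_simps] at this

theorem Nat.sqrt_le_rpow (k : ℕ) {σ : ℝ} (hσ : 1 / 2 ≤ σ) : (Nat.sqrt k : ℝ) ≤ (k : ℝ) ^ σ := by
  rcases k.eq_zero_or_pos with rfl | hk
  · simpa using Real.rpow_nonneg le_rfl σ
  calc (Nat.sqrt k : ℝ) ≤ √(k : ℝ) := Real.nat_sqrt_le_real_sqrt
    _ = (k : ℝ) ^ (1 / 2 : ℝ) := Real.sqrt_eq_rpow _
    _ ≤ (k : ℝ) ^ σ := Real.rpow_le_rpow_of_exponent_le (by exact_mod_cast hk) hσ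

theorem sum_powerset_div_prod_rpow (P : Finset ℕ) {x : ℝ} (hx : 0 ≤ x) (σ : ℝ) :
    ∑ s ∈ P.powerset, (x / ∏ p ∈ s, (p : ℝ)) ^ σ = x ^ σ * ∏ p ∈ P, (1 + (p : ℝ) ^ (-σ)) := by
  rw [prod_one_add, mul_sum]
  refine sum_congr rfl fun s _ ↦ ?_
  rw [Real.div_rpow hx (by positivity), ← Real.finsetProd_rpow _ _ (fun _ _ ↦ by positivity),
    div_eq_mul_inv, ← prod_inv_distrib]
  simp only [Real.rpow_neg (Nat.cast_nonneg _)]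

/-- Rankin's trick: a number that is square away from the primes `≤ T` is `m ^ 2 * a` with `a` a
product of distinct primes `≤ T`, and there are at most `√(N / a) ≤ (x / a) ^ σ` such `m`. -/
theorem card_hasEvenValuationAbove_le {N T : ℕ} {x σ : ℝ} (hN : N ≤ x) (hσ : 1 / 2 ≤ σ) :
    (#{n ∈ Icc 1 N | HasEvenValuationAbove T n} : ℝ)
      ≤ x ^ σ * ∏ p ∈ primesLE T, (1 + (p : ℝ) ^ (-σ)) := by
  have hsub : {n ∈ Icc 1 N | HasEvenValuationAbove T n} ⊆ (primesLE T).powerset.biUnion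
      fun s ↦ (Icc 1 (Nat.sqrt (N / ∏ p ∈ s, p))).image fun m ↦ m ^ 2 * ∏ p ∈ s, p := by
    intro n hn
    obtain ⟨hnN, hn⟩ := mem_filter.mp hn
    have hnN := mem_Icc.mp hnN
    obtain ⟨s, hs, m, rfl⟩ := hn.exists_eq_sq_mul_prod (by omega)
    have hprod : 0 < ∏ p ∈ s, p :=
      prod_pos fun p hp ↦ (Nat.prime_of_mem_primesLE (hs hp)).pos
    have hm : 0 < m := Nat.pos_of_ne_zero fun h ↦ by simp [h] at hnN
    refine mem_biUnion.mpr ⟨s, mem_powerset.mpr hs, mem_image.mpr ⟨m, mem_Icc.mpr ⟨hm, ?_⟩, rfl⟩⟩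
    rw [Nat.le_sqrt', Nat.le_div_iff_mul_le hprod]
    exact hnN.2
  calc (#{n ∈ Icc 1 N | HasEvenValuationAbove T n} : ℝ)
      ≤ ∑ s ∈ (primesLE T).powerset, (Nat.sqrt (N / ∏ p ∈ s, p) : ℝ) := by
        refine mod_cast (card_le_card hsub).trans (card_biUnion_le.trans (sum_le_sum fun s _ ↦ ?_))
        exact card_image_le.trans (by simp)
    _ ≤ ∑ s ∈ (primesLE T).powerset, (x / ∏ p ∈ s, (p : ℝ)) ^ σ := by
        gcongr with s
        refine (Nat.sqrt_le_rpow _ hσ).trans ?_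
        gcongr
        exact Nat.cast_div_le.trans (by push_cast; gcongr)
    _ = x ^ σ * ∏ p ∈ primesLE T, (1 + (p : ℝ) ^ (-σ)) :=
        sum_powerset_div_prod_rpow _ ((Nat.cast_nonneg N).trans hN) σ

theorem lt_of_mem_primesLE_sdiff {m n p : ℕ} (hp : p ∈ primesLE n \ primesLE m) : m < p := by
  have hp := mem_sdiff.mp hp
  exact not_le.mp fun h ↦ hp.2 (Nat.mem_primesLE.mpr ⟨h, Nat.prime_of_mem_primesLE hp.1⟩)

theorem card_primesLE_sdiff_mul_log_le (m n : ℕ) :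
    #(primesLE n \ primesLE m) * log (m + 1) ≤ log 4 * n := by
  calc #(primesLE n \ primesLE m) * log (m + 1)
      ≤ ∑ p ∈ primesLE n \ primesLE m, log p := by
        rw [← nsmul_eq_mul, ← sum_const]
        refine sum_le_sum fun p hp ↦ ?_
        gcongr
        exact_mod_cast lt_of_mem_primesLE_sdiff hp
    _ ≤ ∑ p ∈ primesLE n, log p :=
        sum_le_sum_of_subset_of_nonneg sdiff_subset fun p _ _ ↦ log_natCast_nonneg p
    _ ≤ log 4 * n := by
        rw [← Chebyshev.theta_eq_sum_primesLE_log]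
        exact Chebyshev.theta_le_log4_mul_x (Nat.cast_nonneg n)

theorem sum_inv_primesLE_two_pow_sdiff_le (j : ℕ) :
    ∑ p ∈ primesLE (2 ^ (j + 2)) \ primesLE (2 ^ (j + 1)), (1 / p : ℝ) ≤ 4 / (j + 1) := by
  set Q := primesLE (2 ^ (j + 2)) \ primesLE (2 ^ (j + 1))
  have hlog : ((j + 1 : ℕ) : ℝ) * log 2 ≤ log ((2 ^ (j + 1) : ℕ) + 1 : ℝ) := by
    rw [← Real.log_pow]
    gcongr
    push_cast
    linarith
  have hcard : (#Q : ℝ) * (j + 1) ≤ 2 ^ (j + 3) := by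
    have := (mul_le_mul_of_nonneg_left hlog (Nat.cast_nonneg #Q)).trans
      (card_primesLE_sdiff_mul_log_le (2 ^ (j + 1)) (2 ^ (j + 2)))
    rw [show (4 : ℝ) = 2 ^ 2 by norm_num, Real.log_pow] at this
    refine le_of_mul_le_mul_right ?_ (log_pos one_lt_two)
    push_cast at this
    linear_combination this
  calc ∑ p ∈ Q, (1 / p : ℝ) ≤ ∑ _p ∈ Q, (1 / 2 ^ (j + 1) : ℝ) := by
        refine sum_le_sum fun p hp ↦ one_div_le_one_div_of_le (by positivity) ?_
        exact_mod_cast (lt_of_mem_primesLE_sdiff hp).le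
    _ = #Q / 2 ^ (j + 1) := by rw [sum_const, nsmul_eq_mul, mul_one_div]
    _ ≤ 4 / (j + 1) := by
        rw [div_le_div_iff₀ (by positivity) (by positivity)]
        linear_combination hcard

theorem sum_inv_primesLE_two_pow_le (J : ℕ) :
    ∑ p ∈ primesLE (2 ^ (J + 1)), (1 / p : ℝ) ≤ 1 / 2 + 4 * harmonic J := by
  induction J with
  | zero => simp [show primesLE 2 = {2} by decide]
  | succ J ih =>
    have hsub : primesLE (2 ^ (J + 1)) ⊆ primesLE (2 ^ (J + 2)) :=
      Nat.primesLE_mono (Nat.pow_le_pow_right two_pos (J + 1).le_succ)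
    have := sum_inv_primesLE_two_pow_sdiff_le J
    rw [← sum_sdiff hsub, harmonic_succ]
    push_cast
    linarith [div_eq_mul_inv (4 : ℝ) (J + 1)]

theorem sum_inv_primesLE_le {T J : ℕ} (hT : T ≤ 2 ^ (J + 1)) :
    ∑ p ∈ primesLE T, (1 / p : ℝ) ≤ 9 / 2 + 4 * log J := by
  calc ∑ p ∈ primesLE T, (1 / p : ℝ) ≤ ∑ p ∈ primesLE (2 ^ (J + 1)), (1 / p : ℝ) :=
        sum_le_sum_of_subset_of_nonneg (Nat.primesLE_mono hT) fun _ _ _ ↦ by positivity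
    _ ≤ 1 / 2 + 4 * (1 + log J) := by
        grw [sum_inv_primesLE_two_pow_le, harmonic_le_one_add_log]
    _ = 9 / 2 + 4 * log J := by ring

theorem natLog_two_le_two_mul_log (T : ℕ) : (Nat.log 2 T : ℝ) ≤ 2 * log T := by
  have hlog2 : 1 / 2 < log 2 := by linarith [log_two_gt_d9]
  calc (Nat.log 2 T : ℝ) ≤ log T / log 2 := by exact_mod_cast Real.natLog_le_logb T 2
    _ ≤ log T / (1 / 2) := by gcongr
    _ = 2 * log T := by ring

theorem exp_two_mul_nine_div_two_add_four_log_le {u J : ℝ} (hu : 10 ^ 5 ≤ u) (hJ0 : 0 ≤ J)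
    (hJ : J ≤ 2 * u) :
    exp 2 * (9 / 2 + 4 * log J) ≤ u := by
  set s := √u
  have hs : s ^ 2 = u := sq_sqrt (by linarith)
  have hs316 : 316 ≤ s := Real.le_sqrt_of_sq_le (by linarith)
  have hlogJ : log J ≤ 2 * √J := by
    have := log_le_rpow_div hJ0 (by norm_num : (0 : ℝ) < 1 / 2)
    rwa [← sqrt_eq_rpow, div_eq_mul_inv, mul_comm, show (1 / 2 : ℝ)⁻¹ = 2 by norm_num] at this
  have hsqrtJ : √J ≤ 2 * s := Real.sqrt_le_iff.mpr ⟨by positivity, by nlinarith⟩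
  have hexp2 : exp 2 < 7.4 := by
    rw [show (2 : ℝ) = 1 + 1 by norm_num, exp_add]
    nlinarith [exp_one_lt_d9, exp_pos 1]
  calc exp 2 * (9 / 2 + 4 * log J) ≤ exp 2 * (9 / 2 + 16 * s) :=
        mul_le_mul_of_nonneg_left (by linarith) (exp_pos 2).le
    _ ≤ 7.4 * (9 / 2 + 16 * s) := by gcongr
    _ ≤ u := by nlinarith

theorem sum_primesLE_rpow_neg_le_exp_two_mul {T : ℕ} {u : ℝ} (hu : 0 < u) (hT : log T ≤ u) :
    ∑ p ∈ primesLE T, (p : ℝ) ^ (-(1 - 2 / u)) ≤ exp 2 * ∑ p ∈ primesLE T, (1 / p : ℝ) := by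
  rw [mul_sum]
  refine sum_le_sum fun p hp ↦ ?_
  have hpT := Nat.mem_primesLE.mp hp
  have hp0 : (0 : ℝ) < p := by exact_mod_cast hpT.2.pos
  have hlogp : log p ≤ u := (log_le_log hp0 (by exact_mod_cast hpT.1)).trans hT
  rw [neg_sub, Real.rpow_sub_one hp0.ne', ← mul_one_div, Real.rpow_def_of_pos hp0]
  gcongr
  calc log p * (2 / u) ≤ u * (2 / u) := by gcongr
    _ = 2 := by field_simp

theorem card_hasEvenValuationAbove_le_of_log_le {N T : ℕ} {x u : ℝ} (hu : 10 ^ 5 ≤ u)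
    (hx : 0 < x) (hxu : log x = u ^ 2) (hN : N ≤ x) (hT : log T ≤ u) :
    (#{n ∈ Icc 1 N | HasEvenValuationAbove T n} : ℝ) ≤ x * exp (-u) := by
  have hu0 : 0 < u := by linarith
  have hσ : 1 / 2 ≤ 1 - 2 / u := by
    rw [le_sub_comm, div_le_iff₀ hu0]
    linarith
  have hxσ : x ^ (1 - 2 / u) = x * exp (-(2 * u)) := by
    rw [Real.rpow_def_of_pos hx, hxu, ← exp_log hx, hxu, ← exp_add]
    congr 1
    field_simp
    ring
  have hJ : (Nat.log 2 T : ℝ) ≤ 2 * u := by linarith [natLog_two_le_two_mul_log T]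
  have hprimes := sum_inv_primesLE_le (Nat.lt_pow_succ_log_self one_lt_two T).le
  calc (#{n ∈ Icc 1 N | HasEvenValuationAbove T n} : ℝ)
      ≤ x ^ (1 - 2 / u) * ∏ p ∈ primesLE T, (1 + (p : ℝ) ^ (-(1 - 2 / u))) :=
        card_hasEvenValuationAbove_le hN hσ
    _ ≤ x ^ (1 - 2 / u) * exp u := by
        gcongr
        refine (Real.prod_one_add_le_exp_sum _ fun p ↦ by positivity).trans ?_
        gcongr
        grw [sum_primesLE_rpow_neg_le_exp_two_mul hu0 hT, hprimes]
        exact exp_two_mul_nine_div_two_add_four_log_le hu (Nat.cast_nonneg _) hJ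
    _ = x * exp (-u) := by
        rw [hxσ, mul_assoc, ← exp_add]
        ring_nf

theorem card_hasEvenValuationAbove_and_exists_sq_dvd_le {N : ℕ} {x y u : ℝ} (hu : 10 ^ 5 ≤ u)
    (hx : 0 < x) (hxu : log x = u ^ 2) (hN : N ≤ x) (hy : 1 ≤ y) :
    (#{n ∈ Icc 1 N | HasEvenValuationAbove ⌊y⌋₊ n ∧ ∃ p, ⌊y⌋₊ < p ∧ p ^ 2 ∣ n} : ℝ)
      ≤ 2 * x * exp (-u) := by
  have hy0 : 0 < y := by linarith
  rcases le_total u (log y) with hlarge | hsmall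
  · calc (#{n ∈ Icc 1 N | HasEvenValuationAbove ⌊y⌋₊ n ∧ ∃ p, ⌊y⌋₊ < p ∧ p ^ 2 ∣ n} : ℝ)
        ≤ #{n ∈ Icc 1 N | ∃ p, ⌊y⌋₊ < p ∧ p ^ 2 ∣ n} :=
          mod_cast card_le_card (monotone_filter_right _ fun _ _ h ↦ h.2)
      _ ≤ 2 * N / (⌊y⌋₊ + 1) := card_filter_exists_sq_dvd_le N ⌊y⌋₊
      _ ≤ 2 * x / y := by gcongr; exact (Nat.lt_floor_add_one y).le
      _ = 2 * x * exp (-log y) := by rw [exp_neg, exp_log hy0, div_eq_mul_inv]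
      _ ≤ 2 * x * exp (-u) := by gcongr
  · have hT : log ⌊y⌋₊ ≤ u :=
      (log_le_log (by exact_mod_cast Nat.floor_pos.mpr hy) (Nat.floor_le hy0.le)).trans hsmall
    calc (#{n ∈ Icc 1 N | HasEvenValuationAbove ⌊y⌋₊ n ∧ ∃ p, ⌊y⌋₊ < p ∧ p ^ 2 ∣ n} : ℝ)
        ≤ #{n ∈ Icc 1 N | HasEvenValuationAbove ⌊y⌋₊ n} :=
          mod_cast card_le_card (monotone_filter_right _ fun _ _ h ↦ h.1)
      _ ≤ x * exp (-u) := card_hasEvenValuationAbove_le_of_log_le hu hx hxu hN hT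
      _ ≤ 2 * x * exp (-u) := by linarith [mul_pos hx (exp_pos (-u))]

theorem stmt_2 :
    ∃ C > (0 : ℝ), ∃ x₀ : ℝ, ∀ x : ℝ, x₀ ≤ x → ∀ c : ℝ, 0 < c → c ≤ 1 →
      (({n : ℕ | 0 < n ∧ (n : ℝ) ≤ x ∧ (tn n : ℝ) ≤ x ^ c}.ncard : ℝ))
        ≤ ({n : ℕ | 0 < n ∧ (n : ℝ) ≤ x ∧ (Pplus n : ℝ) ≤ x ^ c}.ncard : ℝ)
          + C * x * Real.exp (-Real.sqrt (Real.log x)) := by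
  refine ⟨2, two_pos, exp (10 ^ 10), fun x hx c hc _ ↦ ?_⟩
  have hx0 : 0 < x := (exp_pos _).trans_le hx
  have hlogx : 10 ^ 10 ≤ log x := by simpa using log_le_log (exp_pos _) hx
  have hu : 10 ^ 5 ≤ √(log x) := Real.le_sqrt_of_sq_le (by linarith)
  have hy : 1 ≤ x ^ c := Real.one_le_rpow ((one_le_exp (by norm_num)).trans hx) hc.le
  calc _ ≤ _ := ncard_tn_le_ncard_Pplus_add_card hy
    _ ≤ _ := by
        gcongr
        exact card_hasEvenValuationAbove_and_exists_sq_dvd_le hu hx0 (sq_sqrt (by linarith)).symm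
          (Nat.floor_le hx0.le) hy
end

section
/- There exist a constant C > 0 and x₀ such that for all real x ≥ x₀ and all real c with 0 < c ≤ 1, one has #{n ≤ x : P⁺(n) ≤ x^c} ≤ #{n ≤ x : t_n ≤ x^c} + C·x/(c·log x), uniformly in c. -/
open Finset Real

theorem linearIndepOn_zmod_two_of_sum_ne_zero {ι V : Type*} [AddCommGroup V] [Module (ZMod 2) V]
    {v : ι → V} {s : Finset ι} (h : ∀ t ⊆ s, t.Nonempty → ∑ i ∈ t, v i ≠ 0) :
    LinearIndepOn (ZMod 2) v s := by
  classical
  refine linearIndepOn_finset_iff.2 fun f hf i hi => by_contra fun hfi => ?_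
  refine h {j ∈ s | f j ≠ 0} (filter_subset _ _) ⟨i, mem_filter.2 ⟨hi, hfi⟩⟩ ?_
  have hone : ∀ a : ZMod 2, a ≠ 0 → a = 1 := by decide
  rw [← hf, sum_filter]
  refine sum_congr rfl fun j _ => ?_
  split_ifs with hj
  · rw [hone _ hj, one_smul]
  · rw [not_not.1 hj, zero_smul]

theorem Nat.isSquare_of_forall_even_factorization {n : ℕ} (h : ∀ p, Even (n.factorization p)) :
    IsSquare n := by
  rcases eq_or_ne n 0 with rfl | hn
  · exact ⟨0, rfl⟩
  refine ⟨n.factorization.prod fun p k => p ^ (k / 2), ?_⟩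
  rw [← Finsupp.prod_mul]
  conv_lhs => rw [← Nat.prod_factorization_pow_eq_self hn]
  refine Finsupp.prod_congr fun p _ => ?_
  obtain ⟨k, hk⟩ := h p
  rw [← pow_add, hk]
  congr 1
  omega

noncomputable def parityVector (P : Finset ℕ) (n : ℕ) : P → ZMod 2 :=
  fun p => (n.factorization p : ZMod 2)

theorem isSquare_prod_of_sum_parityVector_eq_zero {P D : Finset ℕ}
    (hD : ∀ m ∈ D, m ≠ 0 ∧ m.primeFactors ⊆ P) (h : ∑ m ∈ D, parityVector P m = 0) :
    IsSquare (∏ m ∈ D, m) := by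
  refine Nat.isSquare_of_forall_even_factorization fun p => ?_
  rw [Nat.factorization_prod fun m hm => (hD m hm).1, Finsupp.finsetSum_apply]
  by_cases hp : p ∈ P
  · rw [← ZMod.natCast_eq_zero_iff_even, Nat.cast_sum]
    simpa [parityVector] using congrFun h ⟨p, hp⟩
  · rw [sum_eq_zero fun m hm => Finsupp.notMem_support_iff.1 fun hpm =>
      hp ((hD m hm).2 (by simpa using hpm))]
    exact .zero

theorem tn_le_of_isSquare {n t : ℕ} {S : Finset ℕ} (hS : S ⊆ Icc (n + 1) (n + t))
    (hsq : IsSquare (n * ∏ m ∈ S, m)) : tn n ≤ t :=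
  Nat.sInf_le ⟨S, hS, hsq⟩

theorem le_Pplus {n p : ℕ} (hp : p ∈ n.primeFactors) : p ≤ Pplus n := by
  have h := le_max hp
  unfold Pplus
  cases hmax : n.primeFactors.max with
  | bot => simp [hmax] at h
  | coe m => simpa [hmax] using h

theorem primeFactors_subset_primesLE {n Y : ℕ} (h : Pplus n ≤ Y) :
    n.primeFactors ⊆ Nat.primesLE Y :=
  fun _ hp => Nat.mem_primesLE.2 ⟨(le_Pplus hp).trans h, Nat.prime_of_mem_primeFactors hp⟩

theorem card_le_primeCounting_of_subset_Ioc {T : Finset ℕ} {a Y : ℕ} (hT : T ⊆ Ioc a (a + Y))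
    (hsmooth : ∀ n ∈ T, Pplus n ≤ Y) (htn : ∀ n ∈ T, Y < tn n) : #T ≤ Nat.primeCounting Y := by
  classical
  have hind : LinearIndepOn (ZMod 2) (parityVector (Nat.primesLE Y)) (T : Set ℕ) := by
    refine linearIndepOn_zmod_two_of_sum_ne_zero fun D hDT hD hsum => ?_
    have hnD := D.min'_mem hD
    set n := D.min' hD
    have hS : D.erase n ⊆ Icc (n + 1) (n + Y) := fun m hm => by
      have hmn := D.min'_lt_of_mem_erase_min' hD hm
      have hm := mem_Ioc.1 (hT (hDT (mem_of_mem_erase hm)))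
      have hn := mem_Ioc.1 (hT (hDT hnD))
      exact mem_Icc.2 ⟨hmn, by omega⟩
    have hsq : IsSquare (n * ∏ m ∈ D.erase n, m) := by
      rw [mul_prod_erase D (fun m => m) hnD]
      refine isSquare_prod_of_sum_parityVector_eq_zero (fun m hm => ⟨?_, ?_⟩) hsum
      · exact (Nat.lt_of_le_of_lt (Nat.zero_le a) (mem_Ioc.1 (hT (hDT hm))).1).ne'
      · exact primeFactors_subset_primesLE (hsmooth m (hDT hm))
    exact (htn n (hDT hnD)).not_ge (tn_le_of_isSquare hS hsq)
  simpa [Nat.primesLE_card_eq_primeCounting] using hind.fintype_card_le_finrank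

theorem card_le_mul_of_card_subset_Ioc_le {A : Finset ℕ} {N Y K : ℕ} (hY : 0 < Y)
    (hA : A ⊆ Icc 1 N) (hK : ∀ a, ∀ T ⊆ A, T ⊆ Ioc a (a + Y) → #T ≤ K) :
    #A ≤ (N / Y + 1) * K := by
  have hblock : ∀ n ∈ A, (n - 1) / Y ∈ range (N / Y + 1) := fun n hn => by
    have := mem_Icc.1 (hA hn)
    exact mem_range.2 (Nat.lt_succ_of_le (Nat.div_le_div_right (by omega)))
  have hfiber : ∀ j ∈ range (N / Y + 1), #{n ∈ A | (n - 1) / Y = j} ≤ K := fun j _ => by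
    refine hK (j * Y) _ (filter_subset _ _) fun n hn => ?_
    obtain ⟨hnA, rfl⟩ := mem_filter.1 hn
    have h1 := (mem_Icc.1 (hA hnA)).1
    have h2 := Nat.div_mul_le_self (n - 1) Y
    have h3 := Nat.lt_div_mul_add (a := n - 1) hY
    exact mem_Ioc.2 ⟨by omega, by omega⟩
  simpa [mul_comm] using card_le_mul_card_image_of_maps_to hblock K hfiber

noncomputable def smoothWithLargeTn (N Y : ℕ) : Finset ℕ := {n ∈ Icc 1 N | Pplus n ≤ Y ∧ Y < tn n}

theorem card_smoothWithLargeTn_le (N : ℕ) {Y : ℕ} (hY : 0 < Y) :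
    #(smoothWithLargeTn N Y) ≤ (N / Y + 1) * Nat.primeCounting Y :=
  card_le_mul_of_card_subset_Ioc_le hY (filter_subset _ _) fun _ _ hTA hT =>
    card_le_primeCounting_of_subset_Ioc hT (fun _ hn => (mem_filter.1 (hTA hn)).2.1)
      fun _ hn => (mem_filter.1 (hTA hn)).2.2

theorem primeCounting_mul_log_le {Y : ℕ} (hY : 2 ≤ Y) :
    (Nat.primeCounting Y : ℝ) * log Y ≤ 5 * Y := by
  have hY' : (1 : ℝ) < Y := by exact_mod_cast hY
  have hlog : 0 < log Y := log_pos hY'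
  have hpi := Chebyshev.pi_le_log4_mul_div hY'
  rw [Nat.floor_natCast, log_sqrt (by positivity)] at hpi
  have hsqrt := log_le_sub_one_of_pos (sqrt_pos.2 (by linarith : (0:ℝ) < Y))
  rw [log_sqrt (by linarith)] at hsqrt
  have hs : √(Y:ℝ) * √(Y:ℝ) = Y := mul_self_sqrt (by linarith)
  have h4 : log 4 < 1.39 := by
    rw [show (4:ℝ) = 2 ^ 2 by norm_num, log_pow]; norm_num; linarith [log_two_lt_d9]
  calc (Nat.primeCounting Y : ℝ) * log Y ≤ (log 4 * Y / (log Y / 2) + √Y) * log Y := by gcongr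
    _ = 2 * log 4 * Y + √Y * log Y := by field_simp
    _ ≤ 5 * Y := by nlinarith [sqrt_nonneg (Y:ℝ)]

theorem card_smoothWithLargeTn_floor_le {x c : ℝ} (hx : 1 < x) (hc : 0 < c) (hc1 : c ≤ 1) :
    (#(smoothWithLargeTn ⌊x⌋₊ ⌊x ^ c⌋₊) : ℝ) ≤ 20 * x / (c * log x) := by
  have hlogx : 0 < log x := log_pos hx
  have hxc : 0 < x ^ c := rpow_pos_of_pos (by linarith) c
  have hlog_rpow : log (x ^ c) = c * log x := log_rpow (by linarith) c
  set N := ⌊x⌋₊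
  set Y := ⌊x ^ c⌋₊
  have hN : (N : ℝ) ≤ x := Nat.floor_le (by linarith)
  rcases lt_or_ge (x ^ c) 2 with hsmall | hlarge
  · have hcard : #(smoothWithLargeTn N Y) ≤ N :=
      (card_le_card (filter_subset _ _)).trans (by simp)
    have hcx : c * log x ≤ 1 := by
      rw [← hlog_rpow]; linarith [log_le_sub_one_of_pos hxc]
    rw [le_div_iff₀ (by positivity)]
    have : (#(smoothWithLargeTn N Y) : ℝ) ≤ x := (Nat.cast_le.2 hcard).trans hN
    nlinarith
  · have hY2 : 2 ≤ Y := Nat.le_floor (by exact_mod_cast hlarge)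
    have hY : (0 : ℝ) < Y := by positivity
    have hlogY : 0 < log Y := log_pos (by exact_mod_cast hY2)
    have hYx : (Y : ℝ) ≤ x := calc
      (Y : ℝ) ≤ x ^ c := Nat.floor_le hxc.le
      _ ≤ x ^ (1 : ℝ) := rpow_le_rpow_of_exponent_le hx.le hc1
      _ = x := rpow_one x
    have hblocks : ((N / Y + 1 : ℕ) : ℝ) ≤ 2 * x / Y := by
      rw [le_div_iff₀ hY]
      have := Nat.div_mul_le_self N Y
      have : ((N / Y * Y : ℕ) : ℝ) ≤ x := (Nat.cast_le.2 this).trans hN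
      push_cast at this ⊢
      nlinarith
    have hcx : c * log x ≤ 2 * log Y := by
      have : x ^ c ≤ (Y : ℝ) ^ 2 := by
        have := Nat.lt_floor_add_one (x ^ c)
        have : (2 : ℝ) ≤ Y := by exact_mod_cast hY2
        nlinarith
      calc c * log x = log (x ^ c) := hlog_rpow.symm
        _ ≤ log ((Y : ℝ) ^ 2) := log_le_log hxc this
        _ = 2 * log Y := by rw [log_pow]; norm_num
    have hpi : (Nat.primeCounting Y : ℝ) ≤ 5 * Y / log Y :=
      (le_div_iff₀ hlogY).2 (primeCounting_mul_log_le hY2)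
    calc (#(smoothWithLargeTn N Y) : ℝ) ≤ ((N / Y + 1 : ℕ) : ℝ) * Nat.primeCounting Y := by
          exact_mod_cast card_smoothWithLargeTn_le N (by omega)
      _ ≤ (2 * x / Y) * (5 * Y / log Y) := by gcongr
      _ = 10 * x / log Y := by field_simp; ring
      _ ≤ 20 * x / (c * log x) := by
          rw [div_le_div_iff₀ hlogY (by positivity)]
          nlinarith

theorem ncard_Pplus_le_le_ncard_tn_le_add_card {x y : ℝ} (hy : 0 ≤ y) :
    ({n : ℕ | 0 < n ∧ (n : ℝ) ≤ x ∧ (Pplus n : ℝ) ≤ y}.ncard : ℝ) ≤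
      {n : ℕ | 0 < n ∧ (n : ℝ) ≤ x ∧ (tn n : ℝ) ≤ y}.ncard + #(smoothWithLargeTn ⌊x⌋₊ ⌊y⌋₊) := by
  have hsub : {n : ℕ | 0 < n ∧ (n : ℝ) ≤ x ∧ (Pplus n : ℝ) ≤ y} ⊆
      {n : ℕ | 0 < n ∧ (n : ℝ) ≤ x ∧ (tn n : ℝ) ≤ y} ∪ smoothWithLargeTn ⌊x⌋₊ ⌊y⌋₊ := by
    rintro n ⟨hn, hnx, hP⟩
    by_cases ht : (tn n : ℝ) ≤ y
    · exact Or.inl ⟨hn, hnx, ht⟩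
    · refine Or.inr (mem_filter.2 ⟨mem_Icc.2 ⟨hn, Nat.le_floor hnx⟩, Nat.le_floor hP, ?_⟩)
      exact (Nat.floor_lt hy).2 (not_le.1 ht)
  have hfin : ({n : ℕ | 0 < n ∧ (n : ℝ) ≤ x ∧ (tn n : ℝ) ≤ y} ∪
      smoothWithLargeTn ⌊x⌋₊ ⌊y⌋₊).Finite :=
    ((Set.finite_Iic ⌊x⌋₊).subset fun n hn => Nat.le_floor hn.2.1).union (finite_toSet _)
  exact_mod_cast ((Set.ncard_le_ncard hsub hfin).trans (Set.ncard_union_le _ _)).trans_eq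
    (by rw [Set.ncard_coe_finset])

theorem stmt_3 :
    ∃ C > (0 : ℝ), ∃ x₀ : ℝ, ∀ x : ℝ, x₀ ≤ x → ∀ c : ℝ, 0 < c → c ≤ 1 →
      (({n : ℕ | 0 < n ∧ (n : ℝ) ≤ x ∧ (Pplus n : ℝ) ≤ x ^ c}.ncard : ℝ))
        ≤ ({n : ℕ | 0 < n ∧ (n : ℝ) ≤ x ∧ (tn n : ℝ) ≤ x ^ c}.ncard : ℝ)
          + C * x / (c * Real.log x) := by
  refine ⟨20, by norm_num, 2, fun x hx c hc hc1 => ?_⟩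
  have hx1 : 1 < x := by linarith
  calc _ ≤ _ := ncard_Pplus_le_le_ncard_tn_le_add_card (rpow_pos_of_pos (by linarith) c).le
    _ ≤ _ := by gcongr; exact card_smoothWithLargeTn_floor_le hx1 hc hc1
end

section
/- Let x and y be real numbers with y ≥ 0, and let I = (x, x+y]. The number of finite subsets S of I ∩ ℕ (including the empty set) such that ∏_{n∈S} n is a perfect square is exactly 2^B, where B = #{n ∈ ℕ : x < n and n + t_n ≤ x + y}. -/
open Finset
open scoped symmDiff

lemma tn_set_nonempty (n : ℕ) :
    {t : ℕ | ∃ S ⊆ Finset.Icc (n + 1) (n + t), IsSquare (n * ∏ m ∈ S, m)}.Nonempty := by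
  rcases Nat.eq_zero_or_pos n with h | h
  · exact ⟨0, ∅, by simp, by simp [h]⟩
  · refine ⟨3 * n, {4 * n}, ?_, ?_⟩
    · simp only [Finset.singleton_subset_iff, Finset.mem_Icc]; omega
    · exact ⟨2 * n, by simp; ring⟩

lemma tn_spec (n : ℕ) :
    ∃ S ⊆ Finset.Icc (n + 1) (n + tn n), IsSquare (n * ∏ m ∈ S, m) :=
  Nat.sInf_mem (tn_set_nonempty n)

lemma tn_le {n t : ℕ} (S : Finset ℕ) (hS : S ⊆ Finset.Icc (n + 1) (n + t))
    (h : IsSquare (n * ∏ m ∈ S, m)) : tn n ≤ t :=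
  Nat.sInf_le ⟨S, hS, h⟩

noncomputable def Wn (n : ℕ) : Finset ℕ := (tn_spec n).choose

lemma Wn_subset (n : ℕ) : Wn n ⊆ Finset.Icc (n + 1) (n + tn n) :=
  (tn_spec n).choose_spec.1

lemma Wn_square (n : ℕ) : IsSquare (n * ∏ m ∈ Wn n, m) :=
  (tn_spec n).choose_spec.2

noncomputable def Sn (n : ℕ) : Finset ℕ := insert n (Wn n)

lemma self_mem_Sn (n : ℕ) : n ∈ Sn n := Finset.mem_insert_self _ _

lemma mem_Sn_bounds {n m : ℕ} (h : m ∈ Sn n) : n ≤ m ∧ m ≤ n + tn n := by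
  rcases Finset.mem_insert.mp h with rfl | h
  · omega
  · have := Finset.mem_Icc.mp (Wn_subset n h); omega

lemma not_self_mem_Wn (n : ℕ) : n ∉ Wn n := by
  intro h
  have := Finset.mem_Icc.mp (Wn_subset n h); omega

lemma Sn_square (n : ℕ) : IsSquare (∏ m ∈ Sn n, m) := by
  rw [Sn, Finset.prod_insert (not_self_mem_Wn n)]
  exact Wn_square n

-- square lemma
lemma isSquare_of_mul_sq (a c : ℕ) (hc : c ≠ 0) (h : IsSquare (a * c ^ 2)) : IsSquare a := by
  obtain ⟨d, hd⟩ := h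
  have hdvd : c ^ 2 ∣ d ^ 2 := ⟨a, by rw [sq d, ← hd]; ring⟩
  have hcd : c ∣ d := (Nat.pow_dvd_pow_iff (by norm_num)).mp hdvd
  obtain ⟨e, rfl⟩ := hcd
  refine ⟨e, ?_⟩
  have h2 : a * c ^ 2 = (e * e) * c ^ 2 := by rw [hd]; ring
  exact Nat.eq_of_mul_eq_mul_right (Nat.pos_of_ne_zero (pow_ne_zero 2 hc)) h2

lemma prod_symmDiff_mul_sq (S S' : Finset ℕ) :
    (∏ m ∈ S ∆ S', m) * (∏ m ∈ S ∩ S', m) ^ 2 = (∏ m ∈ S, m) * (∏ m ∈ S', m) := by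
  have h1 : (∏ m ∈ S \ S', m) * (∏ m ∈ S ∩ S', m) = ∏ m ∈ S, m := by
    rw [← Finset.prod_sdiff (Finset.inter_subset_left : S ∩ S' ⊆ S),
      Finset.sdiff_inter_self_left]
  have h2 : (∏ m ∈ S' \ S, m) * (∏ m ∈ S ∩ S', m) = ∏ m ∈ S', m := by
    rw [Finset.inter_comm, ← Finset.prod_sdiff (Finset.inter_subset_left : S' ∩ S ⊆ S'),
      Finset.sdiff_inter_self_left]
  have hd : (∏ m ∈ S ∆ S', m) = (∏ m ∈ S \ S', m) * (∏ m ∈ S' \ S, m) := by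
    rw [symmDiff_def, Finset.sup_eq_union, Finset.prod_union disjoint_sdiff_sdiff]
  rw [hd, ← h1, ← h2]; ring

lemma isSquare_prod_symmDiff {S S' : Finset ℕ} (h0 : ∀ m ∈ S ∩ S', m ≠ 0)
    (h : IsSquare (∏ m ∈ S, m)) (h' : IsSquare (∏ m ∈ S', m)) :
    IsSquare (∏ m ∈ S ∆ S', m) := by
  apply isSquare_of_mul_sq _ (∏ m ∈ S ∩ S', m) (Finset.prod_ne_zero_iff.mpr h0)
  rw [prod_symmDiff_mul_sq]
  exact h.mul h'

instance : Std.Commutative (α := Finset ℕ) (· ∆ ·) := ⟨symmDiff_comm⟩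
instance : Std.Associative (α := Finset ℕ) (· ∆ ·) := ⟨symmDiff_assoc⟩

noncomputable def Phi (T : Finset ℕ) : Finset ℕ := T.fold (· ∆ ·) ∅ Sn

lemma Phi_empty : Phi ∅ = ∅ := Finset.fold_empty

lemma Phi_insert {n : ℕ} {T : Finset ℕ} (h : n ∉ T) :
    Phi (insert n T) = Sn n ∆ Phi T := Finset.fold_insert h

lemma mem_Phi_exists {m : ℕ} {T : Finset ℕ} (h : m ∈ Phi T) : ∃ n ∈ T, m ∈ Sn n := by
  induction T using Finset.induction_on with
  | empty => simp [Phi_empty] at h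
  | @insert a T ha ih =>
    rw [Phi_insert ha, Finset.mem_symmDiff] at h
    rcases h with ⟨h1, _⟩ | ⟨h1, _⟩
    · exact ⟨a, Finset.mem_insert_self _ _, h1⟩
    · obtain ⟨n, hn, hm⟩ := ih h1
      exact ⟨n, Finset.mem_insert_of_mem hn, hm⟩

lemma not_mem_Phi {c : ℕ} {T : Finset ℕ} (h : ∀ m ∈ T, c ∉ Sn m) : c ∉ Phi T := by
  intro hc
  obtain ⟨n, hn, hm⟩ := mem_Phi_exists hc
  exact h n hn hm

lemma min'_mem_Phi {T : Finset ℕ} (hT : T.Nonempty) : T.min' hT ∈ Phi T := by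
  set n := T.min' hT with hn
  have hnT : n ∈ T := T.min'_mem hT
  have heq : T = insert n (T.erase n) := (Finset.insert_erase hnT).symm
  rw [show Phi T = Phi (insert n (T.erase n)) by rw [← heq]]
  rw [Phi_insert (Finset.notMem_erase _ _), Finset.mem_symmDiff]
  left
  refine ⟨self_mem_Sn n, not_mem_Phi ?_⟩
  intro m hm hmem
  have h1 : m ∈ T := Finset.mem_of_mem_erase hm
  have h2 : m ≠ n := Finset.ne_of_mem_erase hm
  have h3 : n ≤ m := Finset.min'_le T m h1
  have h4 := (mem_Sn_bounds hmem).1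
  omega

lemma Phi_ne_empty {T : Finset ℕ} (hT : T.Nonempty) : Phi T ≠ ∅ := by
  intro h
  have := min'_mem_Phi hT
  rw [h] at this
  simp at this

lemma Phi_union {T T' : Finset ℕ} (h : Disjoint T T') :
    Phi (T ∪ T') = Phi T ∆ Phi T' := by
  induction T using Finset.induction_on with
  | empty =>
    ext m; simp [Phi_empty, Finset.mem_symmDiff]
  | @insert a T ha ih =>
    have haT' : a ∉ T' := Finset.disjoint_left.mp h (Finset.mem_insert_self _ _)
    have h2 : Disjoint T T' := h.mono_left (Finset.subset_insert a T)
    have haU : a ∉ T ∪ T' := by simp [ha, haT']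
    rw [Finset.insert_union, Phi_insert haU, Phi_insert ha, ih h2, symmDiff_assoc]

lemma Phi_symmDiff (T T' : Finset ℕ) : Phi (T ∆ T') = Phi T ∆ Phi T' := by
  have e1 : Phi T = Phi (T \ T') ∆ Phi (T ∩ T') := by
    rw [← Phi_union (Finset.disjoint_sdiff_inter T T'), Finset.sdiff_union_inter]
  have e2 : Phi T' = Phi (T' \ T) ∆ Phi (T' ∩ T) := by
    rw [← Phi_union (Finset.disjoint_sdiff_inter T' T), Finset.sdiff_union_inter]
  have e3 : Phi (T ∆ T') = Phi (T \ T') ∆ Phi (T' \ T) := by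
    rw [symmDiff_def, Finset.sup_eq_union, Phi_union disjoint_sdiff_sdiff]
  have e4 : T ∩ T' = T' ∩ T := Finset.inter_comm _ _
  rw [e1, e2, e3, e4]
  ext m
  simp only [Finset.mem_symmDiff]
  tauto

lemma Phi_square {T : Finset ℕ} (hT : ∀ n ∈ T, 0 < n) :
    IsSquare (∏ m ∈ Phi T, m) := by
  induction T using Finset.induction_on with
  | empty => simp [Phi_empty]
  | @insert a T ha ih =>
    rw [Phi_insert ha]
    apply isSquare_prod_symmDiff
    · intro m hm
      have h1 := Finset.mem_inter.mp hm
      have := (mem_Sn_bounds h1.1).1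
      have := hT a (Finset.mem_insert_self _ _)
      omega
    · exact Sn_square a
    · exact ih fun n hn => hT n (Finset.mem_insert_of_mem hn)

theorem stmt_6 (x y : ℝ) (hy : 0 ≤ y) :
    {S : Finset ℕ | (∀ n ∈ S, 0 < n ∧ x < (n : ℝ) ∧ (n : ℝ) ≤ x + y) ∧
        IsSquare (∏ m ∈ S, m)}.ncard
      = 2 ^ {n : ℕ | 0 < n ∧ x < (n : ℝ) ∧ (n : ℝ) + (tn n : ℝ) ≤ x + y}.ncard := by
  classical
  set b := ⌊x + y⌋₊ with hb
  set Qfin : Finset ℕ :=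
    (Finset.Icc 1 b).filter (fun n => x < (n : ℝ) ∧ (n : ℝ) + (tn n : ℝ) ≤ x + y) with hQfin
  have hmemQ : ∀ n : ℕ, n ∈ Qfin ↔ (0 < n ∧ x < (n : ℝ) ∧ (n : ℝ) + (tn n : ℝ) ≤ x + y) := by
    intro n
    simp only [hQfin, Finset.mem_filter, Finset.mem_Icc]
    constructor
    · rintro ⟨⟨h1, _⟩, h3, h4⟩; exact ⟨h1, h3, h4⟩
    · rintro ⟨h1, h3, h4⟩
      refine ⟨⟨h1, Nat.le_floor ?_⟩, h3, h4⟩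
      have : (n : ℝ) ≤ (n : ℝ) + (tn n : ℝ) := le_add_of_nonneg_right (Nat.cast_nonneg _)
      linarith
  have hQset : {n : ℕ | 0 < n ∧ x < (n : ℝ) ∧ (n : ℝ) + (tn n : ℝ) ≤ x + y} = ↑Qfin := by
    ext n; simp [hmemQ n]
  rw [hQset, Set.ncard_coe_finset]
  -- key surjectivity lemma
  have key : ∀ d : ℕ, ∀ S : Finset ℕ,
      (∀ n ∈ S, 0 < n ∧ x < (n : ℝ) ∧ (n : ℝ) ≤ x + y) → IsSquare (∏ m ∈ S, m) →
      (∀ m ∈ S, b + 1 - d ≤ m) → ∃ T ⊆ Qfin, Phi T = S := by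
    intro d
    induction d using Nat.strong_induction_on with
    | _ d ih =>
      intro S hSP hSsq hSlow
      rcases S.eq_empty_or_nonempty with rfl | hne
      · exact ⟨∅, by simp, Phi_empty⟩
      · set n₀ := S.min' hne with hn₀
        have hn₀S : n₀ ∈ S := S.min'_mem hne
        obtain ⟨hn₀pos, hn₀x, hn₀le⟩ := hSP n₀ hn₀S
        have hn₀b : n₀ ≤ b := Nat.le_floor hn₀le
        have hxy0 : (0 : ℝ) ≤ x + y := le_trans (Nat.cast_nonneg n₀) hn₀le
        have hbxy : (b : ℝ) ≤ x + y := Nat.floor_le hxy0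
        have hSb : ∀ m ∈ S, m ≤ b := fun m hm => Nat.le_floor (hSP m hm).2.2
        have htn : tn n₀ ≤ b - n₀ := by
          apply tn_le (S.erase n₀)
          · intro m hm
            have hmS := Finset.mem_of_mem_erase hm
            have hmne := Finset.ne_of_mem_erase hm
            have h1 : n₀ ≤ m := Finset.min'_le S m hmS
            have h2 : m ≤ b := hSb m hmS
            rw [Finset.mem_Icc]; omega
          · rw [Finset.mul_prod_erase S (fun m => m) hn₀S]; exact hSsq
        have hn₀Q : n₀ ∈ Qfin := by
          rw [hmemQ]
          refine ⟨hn₀pos, hn₀x, ?_⟩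
          have h1 : n₀ + tn n₀ ≤ b := by omega
          calc (n₀ : ℝ) + (tn n₀ : ℝ) = ((n₀ + tn n₀ : ℕ) : ℝ) := by push_cast; ring
            _ ≤ (b : ℝ) := by exact_mod_cast h1
            _ ≤ x + y := hbxy
        set S' := S ∆ Sn n₀ with hS'
        have hSnP : ∀ m ∈ Sn n₀, 0 < m ∧ x < (m : ℝ) ∧ (m : ℝ) ≤ x + y := by
          intro m hm
          obtain ⟨h1, h2⟩ := mem_Sn_bounds hm
          have h3 : m ≤ b := by omega
          refine ⟨by omega, ?_, ?_⟩
          · calc x < (n₀ : ℝ) := hn₀x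
              _ ≤ (m : ℝ) := by exact_mod_cast h1
          · calc (m : ℝ) ≤ (b : ℝ) := by exact_mod_cast h3
              _ ≤ x + y := hbxy
        have hS'P : ∀ m ∈ S', 0 < m ∧ x < (m : ℝ) ∧ (m : ℝ) ≤ x + y := by
          intro m hm
          rw [hS', Finset.mem_symmDiff] at hm
          rcases hm with ⟨h1, _⟩ | ⟨h1, _⟩
          · exact hSP m h1
          · exact hSnP m h1
        have hS'low : ∀ m ∈ S', n₀ + 1 ≤ m := by
          intro m hm
          rw [hS', Finset.mem_symmDiff] at hm
          rcases hm with ⟨h1, h2⟩ | ⟨h1, h2⟩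
          · have := Finset.min'_le S m h1
            have : m ≠ n₀ := by rintro rfl; exact h2 (self_mem_Sn n₀)
            omega
          · have := (mem_Sn_bounds h1).1
            have : m ≠ n₀ := by rintro rfl; exact h2 hn₀S
            omega
        have hS'sq : IsSquare (∏ m ∈ S', m) := by
          apply isSquare_prod_symmDiff
          · intro m hm
            have := (hSP m (Finset.mem_inter.mp hm).1).1
            omega
          · exact hSsq
          · exact Sn_square n₀
        have hd' : b - n₀ < d := by
          have := hSlow n₀ hn₀S
          omega
        obtain ⟨T', hT'sub, hT'eq⟩ := ih (b - n₀) hd' S' hS'P hS'sq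
          (fun m hm => by have := hS'low m hm; omega)
        have hn₀T' : n₀ ∉ T' := by
          intro hmem
          have hne' : T'.Nonempty := ⟨n₀, hmem⟩
          have h1 := min'_mem_Phi hne'
          rw [hT'eq] at h1
          have h2 := hS'low _ h1
          have h3 : T'.min' hne' ≤ n₀ := Finset.min'_le _ _ hmem
          omega
        refine ⟨insert n₀ T', Finset.insert_subset hn₀Q hT'sub, ?_⟩
        rw [Phi_insert hn₀T', hT'eq, hS']
        ext m
        simp only [Finset.mem_symmDiff]
        tauto
  -- the set equals the image of the powerset
  have hG : {S : Finset ℕ | (∀ n ∈ S, 0 < n ∧ x < (n : ℝ) ∧ (n : ℝ) ≤ x + y) ∧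
      IsSquare (∏ m ∈ S, m)} = Phi '' ↑Qfin.powerset := by
    ext S
    simp only [Set.mem_setOf_eq, Set.mem_image, Finset.coe_powerset,
      Set.mem_preimage, Set.mem_powerset_iff, Finset.coe_subset]
    constructor
    · rintro ⟨h1, h2⟩
      obtain ⟨T, hT1, hT2⟩ := key (b + 1) S h1 h2 (fun m hm => by omega)
      exact ⟨T, hT1, hT2⟩
    · rintro ⟨T, hT, rfl⟩
      constructor
      · intro m hm
        obtain ⟨n, hn, hmSn⟩ := mem_Phi_exists hm
        have hnQ := (hmemQ n).mp (hT hn)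
        obtain ⟨h1, h2⟩ := mem_Sn_bounds hmSn
        refine ⟨by omega, ?_, ?_⟩
        · calc x < (n : ℝ) := hnQ.2.1
            _ ≤ (m : ℝ) := by exact_mod_cast h1
        · calc (m : ℝ) ≤ ((n + tn n : ℕ) : ℝ) := by exact_mod_cast h2
            _ = (n : ℝ) + (tn n : ℝ) := by push_cast; ring
            _ ≤ x + y := hnQ.2.2
      · exact Phi_square (fun n hn => ((hmemQ n).mp (hT hn)).1)
  rw [hG]
  rw [Set.ncard_image_of_injOn ?inj, Set.ncard_coe_finset, Finset.card_powerset]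
  case inj =>
    intro T hT T' hT' heq
    by_contra hne
    have h1 : T ∆ T' ≠ ∅ := by
      intro h
      exact hne (symmDiff_eq_bot.mp h)
    have h2 : (T ∆ T').Nonempty := Finset.nonempty_iff_ne_empty.mpr h1
    have h3 := Phi_ne_empty h2
    rw [Phi_symmDiff, heq, symmDiff_self] at h3
    exact h3 rfl
end

section
/- Let y ≥ 2 and L be real numbers and let I be an interval of length L (say I = (a, a+L] with a ≥ 0). If the number of y-smooth positive integers in I is strictly greater than π(y), then there exists a positive integer n ∈ I with t_n ≤ L. -/
/-- A positive integer is `y`-smooth if all of its prime divisors are at most `y`. -/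
def IsYSmooth (y : ℝ) (n : ℕ) : Prop := ∀ p : ℕ, p.Prime → p ∣ n → (p : ℝ) ≤ y

/-- `piReal y` is the number of primes `≤ y`. -/
noncomputable def piReal (y : ℝ) : ℕ := {p : ℕ | p.Prime ∧ (p : ℝ) ≤ y}.ncard

lemma zmod2_eq_one : ∀ x : ZMod 2, x ≠ 0 → x = 1 := by decide

lemma isSquare_of_even_factorization {N : ℕ} (hN : N ≠ 0)
    (h : ∀ p, Even (N.factorization p)) : IsSquare N := by
  refine ⟨∏ p ∈ N.factorization.support, p ^ (N.factorization p / 2), ?_⟩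
  conv_lhs => rw [← Nat.factorization_prod_pow_eq_self hN]
  rw [Finsupp.prod, ← Finset.prod_mul_distrib]
  refine Finset.prod_congr rfl fun p _ => ?_
  rw [← pow_add]
  congr 1
  obtain ⟨k, hk⟩ := h p
  omega

theorem stmt_9 (y L a : ℝ) (hy : 2 ≤ y) (ha : 0 ≤ a)
    (h : piReal y <
      {n : ℕ | 0 < n ∧ a < (n : ℝ) ∧ (n : ℝ) ≤ a + L ∧ IsYSmooth y n}.ncard) :
    ∃ n : ℕ, 0 < n ∧ a < (n : ℝ) ∧ (n : ℝ) ≤ a + L ∧ (tn n : ℝ) ≤ L := by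
  classical
  set T := {n : ℕ | 0 < n ∧ a < (n : ℝ) ∧ (n : ℝ) ≤ a + L ∧ IsYSmooth y n} with hTdef
  set P := {p : ℕ | p.Prime ∧ (p : ℝ) ≤ y} with hPdef
  have hTfin : T.Finite := by
    by_contra hinf
    rw [Set.Infinite.ncard hinf] at h
    omega
  have hPfin : P.Finite := by
    refine Set.Finite.subset (Set.finite_Iic ⌊y⌋₊) fun p hp => ?_
    exact Nat.le_floor hp.2
  set Tf := hTfin.toFinset with hTf
  set Pf := hPfin.toFinset with hPf
  have hcard : Pf.card < Tf.card := by
    show hPfin.toFinset.card < hTfin.toFinset.card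
    rw [← Set.ncard_eq_toFinset_card P hPfin, ← Set.ncard_eq_toFinset_card T hTfin]
    exact h
  -- the vectors of exponents mod 2
  set v : {x // x ∈ Tf} → ({p // p ∈ Pf} → ZMod 2) :=
    fun n p => ((n : ℕ).factorization (p : ℕ) : ZMod 2) with hv
  have hnli : ¬ LinearIndependent (ZMod 2) v := by
    intro hli
    have := hli.fintype_card_le_finrank
    rw [Module.finrank_pi, Fintype.card_coe, Fintype.card_coe] at this
    omega
  rw [Fintype.not_linearIndependent_iff] at hnli
  obtain ⟨g, hsum, i₀, hi₀⟩ := hnli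
  set S : Finset {x // x ∈ Tf} := Finset.univ.filter (fun i => g i ≠ 0) with hS
  set Sn : Finset ℕ := S.image Subtype.val with hSn
  have hSn_memT : ∀ m ∈ Sn, m ∈ T := by
    intro m hm
    rw [hSn, Finset.mem_image] at hm
    obtain ⟨i, _, rfl⟩ := hm
    exact hTfin.mem_toFinset.mp i.2
  have hSn_ne : Sn.Nonempty := by
    refine ⟨(i₀ : ℕ), ?_⟩
    rw [hSn, Finset.mem_image]
    exact ⟨i₀, by simp [hS, hi₀], rfl⟩
  have hSn_pos : ∀ m ∈ Sn, m ≠ 0 := fun m hm => (hSn_memT m hm).1.ne'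
  set N : ℕ := ∏ m ∈ Sn, m with hN
  have hNne : N ≠ 0 := Finset.prod_ne_zero_iff.mpr hSn_pos
  have hNfact : ∀ p : ℕ, N.factorization p = ∑ m ∈ Sn, m.factorization p := by
    intro p
    rw [hN, Nat.factorization_prod hSn_pos]
    simp [Finsupp.finset_sum_apply]
  -- evenness of exponents
  have heven : ∀ p : ℕ, Even (N.factorization p) := by
    intro p
    by_cases hp : p.Prime
    · by_cases hpy : (p : ℝ) ≤ y
      · -- p ∈ Pf; use the linear dependence
        have hpP : p ∈ Pf := hPfin.mem_toFinset.mpr ⟨hp, hpy⟩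
        have h0 : ((∑ m ∈ Sn, m.factorization p : ℕ) : ZMod 2) = 0 := by
          push_cast
          have h1 : (∑ m ∈ Sn, (m.factorization p : ZMod 2))
              = ∑ i ∈ S, v i ⟨p, hpP⟩ := by
            rw [hSn, Finset.sum_image (by simp [Subtype.val_injective.eq_iff])]
          rw [h1, hS, Finset.sum_filter]
          have h2 : ∀ i : {x // x ∈ Tf},
              (if g i ≠ 0 then v i ⟨p, hpP⟩ else 0) = g i • v i ⟨p, hpP⟩ := by
            intro i
            by_cases hgi : g i = 0
            · simp [hgi]
            · rw [if_pos hgi, zmod2_eq_one (g i) hgi, one_smul]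
          rw [Finset.sum_congr rfl fun i _ => h2 i]
          have := congrFun hsum ⟨p, hpP⟩
          simpa [Finset.sum_apply] using this
        rw [ZMod.natCast_eq_zero_iff] at h0
        rw [hNfact p]
        exact even_iff_two_dvd.mpr h0
      · -- p > y : p divides no element of Sn
        have : N.factorization p = 0 := by
          rw [hNfact p]
          refine Finset.sum_eq_zero fun m hm => ?_
          refine Nat.factorization_eq_zero_of_not_dvd fun hdvd => ?_
          exact hpy ((hSn_memT m hm).2.2.2 p hp hdvd)
        simp [this]
    · simp [Nat.factorization_eq_zero_of_not_prime _ hp]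
  have hsq : IsSquare N := isSquare_of_even_factorization hNne heven
  -- extract the minimal element
  set n₀ : ℕ := Sn.min' hSn_ne with hn₀
  have hn₀Sn : n₀ ∈ Sn := Sn.min'_mem hSn_ne
  have hn₀T : n₀ ∈ T := hSn_memT n₀ hn₀Sn
  obtain ⟨hn₀pos, hn₀gt, hn₀le, _⟩ := hn₀T
  have hfloor_le : (⌊a + L⌋₊ : ℝ) ≤ a + L :=
    Nat.floor_le (le_trans (Nat.cast_nonneg n₀) hn₀le)
  have hn₀floor : n₀ ≤ ⌊a + L⌋₊ := Nat.le_floor hn₀le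
  set t : ℕ := ⌊a + L⌋₊ - n₀ with ht
  refine ⟨n₀, hn₀pos, hn₀gt, hn₀le, ?_⟩
  have htn : tn n₀ ≤ t := by
    apply Nat.sInf_le
    refine ⟨Sn.erase n₀, ?_, ?_⟩
    · intro m hm
      have hmne := Finset.ne_of_mem_erase hm
      have hmSn := Finset.mem_of_mem_erase hm
      have hmge : n₀ ≤ m := Sn.min'_le m hmSn
      have hmle : m ≤ ⌊a + L⌋₊ := Nat.le_floor (hSn_memT m hmSn).2.2.1
      rw [Finset.mem_Icc]
      omega
    · rwa [Finset.mul_prod_erase Sn (fun x => x) hn₀Sn]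
  calc (tn n₀ : ℝ) ≤ (t : ℝ) := Nat.cast_le.mpr htn
    _ = (⌊a + L⌋₊ : ℝ) - n₀ := by rw [ht]; push_cast [hn₀floor]; ring
    _ ≤ (a + L) - n₀ := by linarith
    _ ≤ L := by linarith
end

section
/- There exist a constant C > 0 and J₀ such that the following holds for every integer J ≥ J₀: if b₁, ..., b_t are positive integers all of whose prime factors are ≤ J, if 100 ≤ t ≤ J^{1/2}/log J, and if gcd(b_i, b_j) ≤ J for all i ≠ j, then there exist three pairwise distinct indices i, j, k with ω(b_i) ≤ C·J/(t·log J), ω(b_j) ≤ C·J/(t·log J), and ω(b_k) ≤ C·J/(t·log J). -/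
/-!
A prime factor of any `b i` is at most `J`, and two distinct `b i` share at most `log₂ J` prime
factors, since `2 ^ ω n ≤ n` applied to their gcd. The Bonferroni inequality
`∑ |Aᵢ| ≤ |⋃ Aᵢ| + ∑_{i ≠ j} |Aᵢ ∩ Aⱼ|` therefore gives `∑ ω(b i) ≤ π(J) + t² log₂ J`, which is
`O(J / log J)` by Chebyshev's bound and `t² ≤ J / log² J`. By Markov's inequality at most half of
the `b i` have `ω(b i) > 10 J / (t log J)`, which leaves at least `50` good indices.
-/

open Finset Real Filter

namespace Nat

theorem two_pow_card_primeFactors_le {n : ℕ} (hn : n ≠ 0) : 2 ^ #n.primeFactors ≤ n :=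
  calc 2 ^ #n.primeFactors = ∏ _p ∈ n.primeFactors, 2 := (prod_const 2).symm
    _ ≤ ∏ p ∈ n.primeFactors, p := prod_le_prod' fun _p hp => (prime_of_mem_primeFactors hp).two_le
    _ ≤ n := le_of_dvd (pos_of_ne_zero hn) (prod_primeFactors_dvd n)

theorem card_primeFactors_le_log_div_log_two {n : ℕ} (hn : n ≠ 0) :
    (#n.primeFactors : ℝ) ≤ Real.log n / Real.log 2 := by
  rw [le_div_iff₀ (Real.log_pos one_lt_two), ← Real.log_pow]
  exact Real.log_le_log (by positivity) (mod_cast two_pow_card_primeFactors_le hn)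

theorem primeFactors_subset_primesLE {n J : ℕ} (h : ∀ p, p.Prime → p ∣ n → p ≤ J) :
    n.primeFactors ⊆ primesLE J := fun p hp =>
  mem_primesLE.mpr ⟨h p (prime_of_mem_primeFactors hp) (dvd_of_mem_primeFactors hp),
    prime_of_mem_primeFactors hp⟩

end Nat

namespace Finset

theorem sum_card_le_card_biUnion_add_sum_card_inter {ι α : Type*} [DecidableEq ι] [DecidableEq α]
    (s : Finset ι) (A : ι → Finset α) :
    ∑ i ∈ s, #(A i) ≤ #(s.biUnion A) + ∑ ij ∈ s.offDiag, #(A ij.1 ∩ A ij.2) := by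
  have count : ∀ B ⊆ s.biUnion A, #B = ∑ x ∈ s.biUnion A, if x ∈ B then 1 else 0 := by
    intro B hB
    rw [sum_boole, Nat.cast_id, filter_mem_eq_inter, inter_eq_right.mpr hB]
  rw [sum_congr rfl fun i hi => count (A i) (subset_biUnion_of_mem A hi),
    sum_congr rfl fun ij hij => count (A ij.1 ∩ A ij.2)
      (inter_subset_left.trans (subset_biUnion_of_mem A (mem_offDiag.mp hij).1)),
    sum_comm, sum_comm (s := s.offDiag), card_eq_sum_ones (s.biUnion A), ← sum_add_distrib]
  refine sum_le_sum fun x _ => ?_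
  simp only [sum_boole, Nat.cast_id]
  have hfibre : {ij ∈ s.offDiag | x ∈ A ij.1 ∩ A ij.2} = {i ∈ s | x ∈ A i}.offDiag := by
    ext ⟨i, j⟩
    simp only [mem_filter, mem_offDiag, mem_inter]
    tauto
  rw [hfibre, offDiag_card]
  -- a point lying in `d` of the sets is counted `d` times on the left, `1 + d (d - 1)` on the right
  generalize #{i ∈ s | x ∈ A i} = d
  zify [Nat.le_mul_self d]
  nlinarith

theorem card_filter_lt_mul_le_sum {ι R : Type*} [Semiring R] [LinearOrder R] [IsOrderedRing R]
    (s : Finset ι) {f : ι → R} (hf : ∀ i ∈ s, 0 ≤ f i) (X : R) :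
    #{i ∈ s | X < f i} * X ≤ ∑ i ∈ s, f i :=
  calc (#{i ∈ s | X < f i} : R) * X = #{i ∈ s | X < f i} • X := (nsmul_eq_mul _ _).symm
    _ ≤ ∑ i ∈ s with X < f i, f i := card_nsmul_le_sum _ _ _ fun _i hi => (mem_filter.mp hi).2.le
    _ ≤ ∑ i ∈ s, f i := sum_le_sum_of_subset_of_nonneg (filter_subset _ _) fun i hi _ => hf i hi

theorem exists_three_le_of_sum_le {ι : Type*} (s : Finset ι) {f : ι → ℝ} (hf : ∀ i ∈ s, 0 ≤ f i)
    {X : ℝ} (hX : 0 < X) (hsum : ∑ i ∈ s, f i ≤ (#s - 3) * X) :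
    ∃ i ∈ s, ∃ j ∈ s, ∃ k ∈ s, i ≠ j ∧ i ≠ k ∧ j ≠ k ∧ f i ≤ X ∧ f j ≤ X ∧ f k ≤ X := by
  have hbad : (#{i ∈ s | X < f i} : ℝ) ≤ #s - 3 :=
    le_of_mul_le_mul_right ((card_filter_lt_mul_le_sum s hf X).trans hsum) hX
  have hsplit : (#s : ℝ) = #{i ∈ s | X < f i} + #{i ∈ s | ¬X < f i} :=
    mod_cast (card_filter_add_card_filter_not _).symm
  obtain ⟨i, hi, j, hj, k, hk, hij, hik, hjk⟩ :=
    two_lt_card.mp <| show 2 < #{i ∈ s | ¬X < f i} by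
      exact_mod_cast (by linarith : (2 : ℝ) < #{i ∈ s | ¬X < f i})
  simp only [mem_filter, not_lt] at hi hj hk
  exact ⟨i, hi.1, j, hj.1, k, hk.1, hij, hik, hjk, hi.2, hj.2, hk.2⟩

end Finset

theorem eventually_primeCounting_le_three_mul_div_log :
    ∀ᶠ J : ℕ in atTop, (Nat.primeCounting J : ℝ) ≤ 3 * J / log J := by
  filter_upwards [tendsto_natCast_atTop_atTop.eventually
    (Chebyshev.eventually_primeCounting_le one_pos)] with J hJ
  rw [Nat.floor_natCast] at hJ
  refine hJ.trans ?_
  gcongr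
  linarith [log_two_lt_d9, show log 4 = 2 * log 2 by rw [← log_rpow two_pos]; norm_num]

theorem log_pos_and_sq_mul_log_sq_le {J : ℕ} {t : ℝ} (ht : 0 < t)
    (htJ : t ≤ (J : ℝ) ^ ((1 : ℝ) / 2) / log J) : 0 < log J ∧ t ^ 2 * log J ^ 2 ≤ J := by
  have hL : 0 < log J := by
    by_contra! hL
    linarith [div_nonpos_of_nonneg_of_nonpos (by positivity : (0 : ℝ) ≤ (J : ℝ) ^ ((1 : ℝ) / 2)) hL]
  rw [← sqrt_eq_rpow, le_div_iff₀ hL] at htJ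
  refine ⟨hL, ?_⟩
  calc t ^ 2 * log J ^ 2 = (t * log J) ^ 2 := by ring
    _ ≤ √(J : ℝ) ^ 2 := by gcongr
    _ = J := sq_sqrt (Nat.cast_nonneg J)

theorem sum_card_primeFactors_le {ι : Type*} [Fintype ι] [DecidableEq ι] {b : ι → ℕ} {J : ℕ}
    (hb : ∀ i, b i ≠ 0) (hbJ : ∀ i, (b i).primeFactors ⊆ Nat.primesLE J)
    (hgcd : ∀ i j, i ≠ j → Nat.gcd (b i) (b j) ≤ J) :
    ∑ i, (#(b i).primeFactors : ℝ) ≤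
      Nat.primeCounting J + Fintype.card ι ^ 2 * (log J / log 2) := by
  have hunion : #(univ.biUnion fun i => (b i).primeFactors) ≤ Nat.primeCounting J := by
    rw [← Nat.primesLE_card_eq_primeCounting]
    exact card_le_card (biUnion_subset.mpr fun i _ => hbJ i)
  have hpair : ∀ ij ∈ (univ : Finset ι).offDiag,
      (#((b ij.1).primeFactors ∩ (b ij.2).primeFactors) : ℝ) ≤ log J / log 2 := by
    rintro ⟨i, j⟩ hij
    have hg : Nat.gcd (b i) (b j) ≠ 0 := Nat.gcd_ne_zero_left (hb i)
    rw [← Nat.primeFactors_gcd (hb i) (hb j)]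
    refine (Nat.card_primeFactors_le_log_div_log_two hg).trans ?_
    gcongr
    exact hgcd i j (mem_offDiag.mp hij).2.2
  have hoffDiag : #(univ : Finset ι).offDiag ≤ Fintype.card ι ^ 2 := by
    rw [offDiag_card, card_univ, sq]
    exact Nat.sub_le _ _
  calc ∑ i, (#(b i).primeFactors : ℝ)
      ≤ #(univ.biUnion fun i => (b i).primeFactors)
        + ∑ ij ∈ univ.offDiag, (#((b ij.1).primeFactors ∩ (b ij.2).primeFactors) : ℝ) :=
        mod_cast sum_card_le_card_biUnion_add_sum_card_inter univ _
    _ ≤ Nat.primeCounting J + #(univ : Finset ι).offDiag * (log J / log 2) := by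
        refine add_le_add (mod_cast hunion) ?_
        rw [← nsmul_eq_mul]
        exact sum_le_card_nsmul _ _ _ hpair
    _ ≤ Nat.primeCounting J + Fintype.card ι ^ 2 * (log J / log 2) := by
        gcongr
        exact_mod_cast hoffDiag

theorem stmt_16 :
    ∃ C > (0 : ℝ), ∃ J₀ : ℕ, ∀ J : ℕ, J₀ ≤ J →
      ∀ (t : ℕ) (b : Fin t → ℕ),
        (∀ i, 0 < b i) →
        (∀ i, ∀ p : ℕ, p.Prime → p ∣ b i → p ≤ J) →
        100 ≤ t → (t : ℝ) ≤ (J : ℝ) ^ ((1 : ℝ) / 2) / Real.log J →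
        (∀ i j, i ≠ j → Nat.gcd (b i) (b j) ≤ J) →
        ∃ i j k, i ≠ j ∧ i ≠ k ∧ j ≠ k ∧
          ((b i).primeFactors.card : ℝ) ≤ C * J / (t * Real.log J) ∧
          ((b j).primeFactors.card : ℝ) ≤ C * J / (t * Real.log J) ∧
          ((b k).primeFactors.card : ℝ) ≤ C * J / (t * Real.log J) := by
  obtain ⟨J₀, hJ₀⟩ := eventually_atTop.mp eventually_primeCounting_le_three_mul_div_log
  refine ⟨10, by norm_num, J₀, fun J hJ t b hb hbJ ht htJ hgcd => ?_⟩
  have ht : (100 : ℝ) ≤ t := mod_cast ht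
  obtain ⟨hL, htL⟩ := log_pos_and_sq_mul_log_sq_le (by linarith) htJ
  have hJpos : (0 : ℝ) < J := by linarith [(log_pos_iff (Nat.cast_nonneg J)).mp hL]
  have hsum := sum_card_primeFactors_le (fun i => (hb i).ne')
    (fun i => Nat.primeFactors_subset_primesLE (hbJ i)) hgcd
  rw [Fintype.card_fin] at hsum
  have hsumX : ∑ i, (#(b i).primeFactors : ℝ) ≤ (t - 3) * (10 * J / (t * log J)) :=
    calc ∑ i, (#(b i).primeFactors : ℝ) ≤ Nat.primeCounting J + t ^ 2 * (log J / log 2) := hsum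
      _ ≤ 3 * J / log J + 3 / 2 * J / log J := by
        gcongr
        · exact hJ₀ J hJ
        · rw [mul_div_assoc', div_le_div_iff₀ (log_pos one_lt_two) hL]
          nlinarith [log_two_gt_d9]
      _ ≤ (t - 3) * (10 * J / (t * log J)) := by
        rw [← add_div, mul_div_assoc', div_le_div_iff₀ hL (by positivity)]
        nlinarith [mul_pos hJpos hL]
  obtain ⟨i, -, j, -, k, -, hij, hik, hjk, hi, hj, hk⟩ :=
    exists_three_le_of_sum_le (univ : Finset (Fin t)) (f := fun i => (#(b i).primeFactors : ℝ))
      (X := 10 * J / (t * log J)) (fun i _ => Nat.cast_nonneg _) (by positivity)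
      (by simpa using hsumX)
  exact ⟨i, j, k, hij, hik, hjk, hi, hj, hk⟩
end

section
/- Let u ≥ 2 be an integer, let J be a sufficiently large integer, and let 0 = j₁ < j₂ < ⋯ < j_{2u} = J be integers. Set P(x) = ∏_{i=1}^{2u}(x + j_i) ∈ ℤ[x]. Then there exist polynomials f(x) = Σ_{i=0}^{u} a_i x^i ∈ ℚ[x] and g(x) = Σ_{i=0}^{u−1} b_i x^i ∈ ℚ[x] such that: f is monic of degree u (i.e. a_u = 1); for every 0 ≤ i ≤ u, |a_i| ≤ (u−i)^{u−i}·(uJ)^{u−i} and 4^{u−i}·a_i ∈ ℤ; for every 0 ≤ i ≤ u−1, |b_i| ≤ 5·u^{4u−2i}·J^{2u−i}; and P(x) = f(x)² + g(x) as polynomials. -/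
/-!
Write `P = X^(2u) + ∑_{k ≥ 1} a_k X^(2u-k)` and let `c_k` be the coefficients of the
power-series square root of `∑ a_k t^k`: `c_0 = 1` and `2 c_k = a_k - ∑_{0<i<k} c_i c_(k-i)`.
Then `f = ∑_{k ≤ u} c_k X^(u-k)` is monic and `f²` shares the coefficients of `X^(2u-k)`,
`k ≤ u`, with `P`, so `g = P - f²` has degree `< u`; the recursion also gives `2^(2k-1) c_k ∈ ℤ`.

Since `a_k` is the `k`-th elementary symmetric function of the `j_i ∈ [0, J]`,
`|a_k| ≤ (2u)^k J^k`, and induction on the recursion gives `|c_k| ≤ k^k (uJ)^k`: by convexity of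
`t ↦ t log t`, `x^x y^y` with `x + y` fixed is largest at the extremes, so
`i^i (k-i)^(k-i) ≤ (k-1)^(k-1)`. The same convexity, with Bernoulli's inequality, bounds the
coefficients of `f²` below `X^u`, hence those of `g`.
-/

open Polynomial Finset

theorem pow_self_mul_pow_self_le {x y u m : ℕ} (hmx : m ≤ x) (hxu : x ≤ u)
    (hsum : x + y = u + m) : x ^ x * y ^ y ≤ u ^ u * m ^ m := by
  rcases (hmx.trans hxu).eq_or_lt with hmu | hmu
  · obtain rfl : x = u := by omega
    obtain rfl : y = m := by omega
    rfl
  have hlog : (x : ℝ) * Real.log x + y * Real.log y ≤ u * Real.log u + m * Real.log m := by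
    have hmu' : (0 : ℝ) < u - m := by rw [sub_pos]; exact_mod_cast hmu
    set θ : ℝ := (u - x) / (u - m)
    have hθ0 : 0 ≤ θ := div_nonneg (by rw [sub_nonneg]; exact_mod_cast hxu) hmu'.le
    have hθ1 : 0 ≤ 1 - θ := by
      rw [sub_nonneg, div_le_one hmu']; linarith [(Nat.cast_le (α := ℝ)).2 hmx]
    have hθ : θ * (u - m) = u - x := div_mul_cancel₀ _ hmu'.ne'
    have hsum' : (x : ℝ) + y = u + m := by exact_mod_cast hsum
    have hx : θ * m + (1 - θ) * u = x := by linear_combination -hθ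
    have hy : θ * u + (1 - θ) * m = y := by linear_combination hθ - hsum'
    have hm : (m : ℝ) ∈ Set.Ici 0 := Set.mem_Ici.2 m.cast_nonneg
    have hu : (u : ℝ) ∈ Set.Ici 0 := Set.mem_Ici.2 u.cast_nonneg
    have h₁ := Real.convexOn_mul_log.2 hm hu hθ0 hθ1 (add_sub_cancel θ 1)
    have h₂ := Real.convexOn_mul_log.2 hu hm hθ0 hθ1 (add_sub_cancel θ 1)
    simp only [smul_eq_mul, hx, hy] at h₁ h₂
    linarith
  have hpos : ∀ n : ℕ, (0 : ℝ) < (n : ℝ) ^ n := fun n => by exact_mod_cast Nat.pow_self_pos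
  rw [← Nat.cast_le (α := ℝ), ← Real.log_le_log_iff
    (by push_cast; exact mul_pos (hpos x) (hpos y)) (by push_cast; exact mul_pos (hpos u) (hpos m))]
  push_cast
  rwa [Real.log_mul (hpos x).ne' (hpos y).ne', Real.log_mul (hpos u).ne' (hpos m).ne',
    Real.log_pow, Real.log_pow, Real.log_pow, Real.log_pow]

theorem sum_Ioo_pow_self_mul_pow_self_le (k : ℕ) :
    ∑ i ∈ Ioo 0 k, i ^ i * (k - i) ^ (k - i) ≤ (k - 1) ^ k := by
  calc ∑ i ∈ Ioo 0 k, i ^ i * (k - i) ^ (k - i)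
      ≤ ∑ _i ∈ Ioo 0 k, (k - 1) ^ (k - 1) * 1 ^ 1 := by
        refine sum_le_sum fun i hi => ?_
        rw [mem_Ioo] at hi
        exact pow_self_mul_pow_self_le (by omega) (by omega) (by omega)
    _ ≤ (k - 1) ^ k := by
        rw [sum_const, Nat.card_Ioo, smul_eq_mul, one_pow, mul_one, Nat.sub_zero]
        cases k <;> simp [pow_succ']

theorem two_pow_add_pred_pow_le {k : ℕ} (hk : 0 < k) : 2 ^ k + (k - 1) ^ k ≤ 2 * k ^ k := by
  rcases (Nat.one_le_iff_ne_zero.2 hk.ne').eq_or_lt with rfl | hk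
  · norm_num
  have h₁ : 2 ^ k ≤ k ^ k := Nat.pow_le_pow_left hk k
  have h₂ : (k - 1) ^ k ≤ k ^ k := Nat.pow_le_pow_left (Nat.sub_le k 1) k
  omega

theorem succ_mul_pow_self_le_add_pow {n : ℕ} (hn : 0 < n) (d : ℕ) :
    (d + 1) * n ^ n ≤ (n + d) ^ n := by
  have := pow_add_mul_le_add_pow (Nat.zero_le n) (by omega : 0 ≤ 2 * n + d) n
  calc (d + 1) * n ^ n = n ^ n + n * n ^ (n - 1) * d := by
        rw [← pow_succ', Nat.sub_add_cancel hn]; ring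
    _ ≤ (n + d) ^ n := this

theorem sum_antidiagonal_pow_self_le {u i : ℕ} (hi : i < u) :
    ∑ ab ∈ antidiagonal i, (u - ab.1) ^ (u - ab.1) * (u - ab.2) ^ (u - ab.2) ≤
      u ^ (2 * u - i) :=
  calc ∑ ab ∈ antidiagonal i, (u - ab.1) ^ (u - ab.1) * (u - ab.2) ^ (u - ab.2)
      ≤ ∑ _ab ∈ antidiagonal i, u ^ u * (u - i) ^ (u - i) := by
        refine sum_le_sum fun ab hab => ?_
        rw [HasAntidiagonal.mem_antidiagonal] at hab
        exact pow_self_mul_pow_self_le (by omega) (by omega) (by omega)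
    _ = u ^ u * ((i + 1) * (u - i) ^ (u - i)) := by
        rw [sum_const, Nat.card_antidiagonal, smul_eq_mul]; ring
    _ ≤ u ^ u * (u - i + i) ^ (u - i) :=
        Nat.mul_le_mul_left _ (succ_mul_pow_self_le_add_pow (by omega) i)
    _ = u ^ (2 * u - i) := by
        rw [Nat.sub_add_cancel hi.le, ← pow_add]; congr 1; omega

section SqrtCoeff

variable {K : Type*} [Field K] (a : ℕ → K)

def sqrtCoeff : ℕ → K
  | 0 => 1
  | k + 1 => (a (k + 1) - ∑ i ∈ (Ioo 0 (k + 1)).attach,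
      sqrtCoeff i * sqrtCoeff (k + 1 - i)) / 2
  termination_by k => k
  decreasing_by
    · exact (mem_Ioo.1 i.2).2
    · have := mem_Ioo.1 i.2; omega

@[simp]
theorem sqrtCoeff_zero : sqrtCoeff a 0 = 1 := by
  rw [sqrtCoeff]

theorem sqrtCoeff_of_pos {k : ℕ} (hk : 0 < k) :
    sqrtCoeff a k = (a k - ∑ i ∈ Ioo 0 k, sqrtCoeff a i * sqrtCoeff a (k - i)) / 2 := by
  obtain ⟨k, rfl⟩ := Nat.exists_eq_add_of_lt hk
  rw [sqrtCoeff, zero_add,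
    sum_attach (Ioo 0 (k + 1)) fun i => sqrtCoeff a i * sqrtCoeff a (k + 1 - i)]

theorem sum_antidiagonal_sqrtCoeff_mul [NeZero (2 : K)] (h0 : a 0 = 1) (k : ℕ) :
    ∑ ij ∈ antidiagonal k, sqrtCoeff a ij.1 * sqrtCoeff a ij.2 = a k := by
  rcases Nat.eq_zero_or_pos k with rfl | hk
  · simp [h0]
  rw [Nat.sum_antidiagonal_eq_sum_range_succ_mk, sum_range_succ, range_eq_Ico,
    sum_eq_sum_Ico_succ_bot hk, Ico_add_one_left_eq_Ioo]
  simp only [sqrtCoeff_zero, Nat.sub_zero, Nat.sub_self, one_mul, mul_one]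
  rw [sqrtCoeff_of_pos a hk]
  field_simp
  ring

theorem mk_sqrtCoeff_sq [NeZero (2 : K)] (h0 : a 0 = 1) :
    PowerSeries.mk (sqrtCoeff a) ^ 2 = PowerSeries.mk a := by
  ext k
  rw [sq, PowerSeries.coeff_mul, PowerSeries.coeff_mk]
  simpa only [PowerSeries.coeff_mk] using sum_antidiagonal_sqrtCoeff_mul a h0 k

theorem two_pow_mul_sqrtCoeff_mem [NeZero (2 : K)] (S : Subring K) (ha : ∀ k, a k ∈ S) {k : ℕ}
    (hk : 0 < k) : 2 ^ (2 * k - 1) * sqrtCoeff a k ∈ S := by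
  induction k using Nat.strong_induction_on with
  | _ k ih =>
  have hsplit : 2 ^ (2 * k - 1) * sqrtCoeff a k = 2 ^ (2 * k - 2) * a k -
      ∑ i ∈ Ioo 0 k,
        (2 ^ (2 * i - 1) * sqrtCoeff a i) * (2 ^ (2 * (k - i) - 1) * sqrtCoeff a (k - i)) := by
    have hprod : ∀ i ∈ Ioo 0 k, (2 ^ (2 * i - 1) * sqrtCoeff a i) *
        (2 ^ (2 * (k - i) - 1) * sqrtCoeff a (k - i)) =
        2 ^ (2 * k - 2) * (sqrtCoeff a i * sqrtCoeff a (k - i)) := fun i hi => by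
      rw [mem_Ioo] at hi
      rw [mul_mul_mul_comm, ← pow_add, show 2 * i - 1 + (2 * (k - i) - 1) = 2 * k - 2 by omega]
    rw [sqrtCoeff_of_pos a hk, sum_congr rfl hprod, ← mul_sum,
      show 2 * k - 1 = 2 * k - 2 + 1 by omega, pow_succ]
    field_simp
  rw [hsplit]
  refine sub_mem (mul_mem (pow_mem (ofNat_mem S 2) _) (ha k)) (sum_mem fun i hi => ?_)
  rw [mem_Ioo] at hi
  exact mul_mem (ih i hi.2 hi.1) (ih (k - i) (by omega) (by omega))

theorem four_pow_mul_sqrtCoeff_mem [NeZero (2 : K)] (S : Subring K) (ha : ∀ k, a k ∈ S)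
    (k : ℕ) : 4 ^ k * sqrtCoeff a k ∈ S := by
  rcases Nat.eq_zero_or_pos k with rfl | hk
  · simp
  have h4 : (4 : K) ^ k = 2 * 2 ^ (2 * k - 1) := by
    rw [← pow_succ', show 2 * k - 1 + 1 = 2 * k by omega, pow_mul]; norm_num
  rw [h4, mul_assoc]
  exact mul_mem (ofNat_mem S 2) (two_pow_mul_sqrtCoeff_mem a S ha hk)

theorem abs_sqrtCoeff_le [LinearOrder K] [IsStrictOrderedRing K] {M : K} (hM : 0 ≤ M) {n : ℕ}
    (ha : ∀ k ≤ n, |a k| ≤ (2 * M) ^ k) {k : ℕ} (hk : k ≤ n) :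
    |sqrtCoeff a k| ≤ k ^ k * M ^ k := by
  induction k using Nat.strong_induction_on with
  | _ k ih =>
  rcases Nat.eq_zero_or_pos k with rfl | hk0
  · simp
  have hsum : |∑ i ∈ Ioo 0 k, sqrtCoeff a i * sqrtCoeff a (k - i)| ≤
      ((k - 1 : ℕ) : K) ^ k * M ^ k :=
    calc _ ≤ ∑ i ∈ Ioo 0 k, |sqrtCoeff a i * sqrtCoeff a (k - i)| := abs_sum_le_sum_abs _ _
      _ ≤ ∑ i ∈ Ioo 0 k, ((i ^ i * (k - i) ^ (k - i) : ℕ) : K) * M ^ k :=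
          sum_le_sum fun i hi => by
            rw [mem_Ioo] at hi
            calc |sqrtCoeff a i * sqrtCoeff a (k - i)|
                ≤ ((i : K) ^ i * M ^ i) * (((k - i : ℕ) : K) ^ (k - i) * M ^ (k - i)) := by
                  rw [abs_mul]
                  exact mul_le_mul (ih i hi.2 (by omega)) (ih (k - i) (by omega) (by omega))
                    (abs_nonneg _) (by positivity)
              _ = _ := by
                  rw [mul_mul_mul_comm, ← pow_add, Nat.add_sub_cancel' hi.2.le, Nat.cast_mul,
                    Nat.cast_pow, Nat.cast_pow]
      _ = ((∑ i ∈ Ioo 0 k, i ^ i * (k - i) ^ (k - i) : ℕ) : K) * M ^ k := by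
          rw [← sum_mul, Nat.cast_sum]
      _ ≤ ((k - 1 : ℕ) : K) ^ k * M ^ k := by
          gcongr
          exact_mod_cast sum_Ioo_pow_self_mul_pow_self_le k
  have hnum : (2 : K) ^ k + ((k - 1 : ℕ) : K) ^ k ≤ 2 * (k : K) ^ k := by
    exact_mod_cast two_pow_add_pred_pow_le hk0
  rw [sqrtCoeff_of_pos a hk0, abs_div, abs_two, div_le_iff₀ two_pos]
  calc _ ≤ |a k| + |∑ i ∈ Ioo 0 k, sqrtCoeff a i * sqrtCoeff a (k - i)| := abs_sub _ _
    _ ≤ (2 * M) ^ k + ((k - 1 : ℕ) : K) ^ k * M ^ k := add_le_add (ha k hk) hsum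
    _ = (2 ^ k + ((k - 1 : ℕ) : K) ^ k) * M ^ k := by ring
    _ ≤ 2 * (k : K) ^ k * M ^ k := by gcongr
    _ = _ := by ring

end SqrtCoeff

section SqrtPoly

variable {K : Type*} [Field K] (a : ℕ → K) (u : ℕ)

/-- `∑_{k ≤ u} sqrtCoeff a k • X ^ (u - k)`. For `a k = P.coeff (2 * u - k)` with `P` monic of
degree `2 * u`, this is the polynomial part of `√P`. -/
noncomputable def sqrtPoly : K[X] :=
  reflect u (PowerSeries.trunc (u + 1) (PowerSeries.mk (sqrtCoeff a)))

theorem coeff_sqrtPoly (n : ℕ) :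
    (sqrtPoly a u).coeff n = if n ≤ u then sqrtCoeff a (u - n) else 0 := by
  rw [sqrtPoly, coeff_reflect, PowerSeries.coeff_trunc]
  by_cases hn : n ≤ u
  · rw [revAt_le hn, if_pos (by omega), if_pos hn, PowerSeries.coeff_mk]
  · rw [revAt_eq_self_of_lt (by omega), if_neg (by omega), if_neg hn]

theorem natDegree_sqrtPoly_le : (sqrtPoly a u).natDegree ≤ u :=
  natDegree_le_iff_coeff_eq_zero.2 fun n hn => by
    rw [coeff_sqrtPoly, if_neg (by exact_mod_cast hn.not_ge)]

theorem coeff_sqrtPoly_self : (sqrtPoly a u).coeff u = 1 := by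
  simp [coeff_sqrtPoly]

theorem sqrtPoly_monic : (sqrtPoly a u).Monic :=
  monic_of_natDegree_le_of_coeff_eq_one u (natDegree_sqrtPoly_le a u) (coeff_sqrtPoly_self a u)

theorem natDegree_sqrtPoly : (sqrtPoly a u).natDegree = u :=
  natDegree_eq_of_le_of_coeff_ne_zero (natDegree_sqrtPoly_le a u)
    (by rw [coeff_sqrtPoly_self]; exact one_ne_zero)

theorem coeff_sqrtPoly_sq [NeZero (2 : K)] (h0 : a 0 = 1) {k : ℕ} (hk : k ≤ u) :
    (sqrtPoly a u ^ 2).coeff (2 * u - k) = a k := by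
  have hdeg :=
    Nat.lt_succ_iff.1 (PowerSeries.natDegree_trunc_lt (PowerSeries.mk (sqrtCoeff a)) u)
  rw [sq, sqrtPoly, ← reflect_mul _ _ hdeg hdeg, coeff_reflect, revAt_le (by omega),
    show u + u - (2 * u - k) = k by omega, ← Polynomial.coeff_coe, Polynomial.coe_mul,
    ← PowerSeries.coeff_mul_eq_coeff_trunc_mul_trunc _ _ (Nat.lt_succ_of_le hk), ← sq,
    mk_sqrtCoeff_sq a h0, PowerSeries.coeff_mk]

end SqrtPoly

theorem degree_sub_sqrtPoly_sq_lt {K : Type*} [Field K] [NeZero (2 : K)] {p : K[X]} {u : ℕ}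
    (hp : p.natDegree ≤ 2 * u) (hp₁ : p.coeff (2 * u) = 1) :
    (p - sqrtPoly (fun k => p.coeff (2 * u - k)) u ^ 2).degree < u := by
  set f := sqrtPoly (fun k => p.coeff (2 * u - k)) u
  refine degree_lt_iff_coeff_zero _ _ |>.2 fun n hn => ?_
  rw [coeff_sub, sub_eq_zero]
  rcases le_or_gt n (2 * u) with h | h
  · obtain ⟨k, hk, rfl⟩ : ∃ k ≤ u, n = 2 * u - k := ⟨2 * u - n, by omega, by omega⟩
    exact (coeff_sqrtPoly_sq (fun k => p.coeff (2 * u - k)) u (by simpa using hp₁) hk).symm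
  · have hf : (f ^ 2).natDegree < n :=
      (natDegree_pow_le_of_le 2 (natDegree_sqrtPoly_le _ u)).trans_lt (by omega)
    rw [coeff_eq_zero_of_natDegree_lt (hp.trans_lt h), coeff_eq_zero_of_natDegree_lt hf]

section Bounds

variable {K : Type*} [Field K] [LinearOrder K] [IsStrictOrderedRing K] {a : ℕ → K} {u : ℕ}
  {M : K}

theorem abs_coeff_sqrtPoly_le (hM : 0 ≤ M) (ha : ∀ k ≤ u, |a k| ≤ (2 * M) ^ k) {i : ℕ}
    (hi : i ≤ u) : |(sqrtPoly a u).coeff i| ≤ ((u - i : ℕ) : K) ^ (u - i) * M ^ (u - i) := by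
  rw [coeff_sqrtPoly, if_pos hi]
  exact abs_sqrtCoeff_le a hM ha (Nat.sub_le u i)

theorem abs_coeff_sqrtPoly_sq_le (hM : 0 ≤ M) (ha : ∀ k ≤ u, |a k| ≤ (2 * M) ^ k) {i : ℕ}
    (hi : i < u) : |(sqrtPoly a u ^ 2).coeff i| ≤ (u * M) ^ (2 * u - i) := by
  set b : ℕ × ℕ → ℕ := fun xy => (u - xy.1) ^ (u - xy.1) * (u - xy.2) ^ (u - xy.2)
  calc |(sqrtPoly a u ^ 2).coeff i|
      ≤ ∑ xy ∈ antidiagonal i, |(sqrtPoly a u).coeff xy.1 * (sqrtPoly a u).coeff xy.2| := by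
        rw [sq, coeff_mul]; exact abs_sum_le_sum_abs _ _
    _ ≤ ∑ xy ∈ antidiagonal i, (b xy : K) * M ^ (2 * u - i) := sum_le_sum fun xy hxy => by
        rw [HasAntidiagonal.mem_antidiagonal] at hxy
        calc _ ≤ (((u - xy.1 : ℕ) : K) ^ (u - xy.1) * M ^ (u - xy.1)) *
              (((u - xy.2 : ℕ) : K) ^ (u - xy.2) * M ^ (u - xy.2)) := by
              rw [abs_mul]
              exact mul_le_mul (abs_coeff_sqrtPoly_le hM ha (by omega))
                (abs_coeff_sqrtPoly_le hM ha (by omega)) (abs_nonneg _) (by positivity)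
          _ = _ := by
              rw [mul_mul_mul_comm, ← pow_add, show u - xy.1 + (u - xy.2) = 2 * u - i by omega]
              simp [b]
    _ = ((∑ xy ∈ antidiagonal i, b xy : ℕ) : K) * M ^ (2 * u - i) := by
        rw [← sum_mul, Nat.cast_sum]
    _ ≤ (u : K) ^ (2 * u - i) * M ^ (2 * u - i) := by
        gcongr
        exact_mod_cast sum_antidiagonal_pow_self_le hi
    _ = (u * M) ^ (2 * u - i) := (mul_pow _ _ _).symm

theorem abs_coeff_sub_sqrtPoly_sq_le (hM : 0 ≤ M) (hu : 2 ≤ u) {p : K[X]}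
    (hp : ∀ k ≤ 2 * u, |p.coeff (2 * u - k)| ≤ (2 * M) ^ k) {i : ℕ} (hi : i < u) :
    |(p - sqrtPoly (fun k => p.coeff (2 * u - k)) u ^ 2).coeff i| ≤
      2 * (u * M) ^ (2 * u - i) := by
  have hpi : |p.coeff i| ≤ (u * M) ^ (2 * u - i) := by
    calc |p.coeff i| = |p.coeff (2 * u - (2 * u - i))| := by rw [Nat.sub_sub_self (by omega)]
      _ ≤ (2 * M) ^ (2 * u - i) := hp _ (Nat.sub_le _ _)
      _ ≤ (u * M) ^ (2 * u - i) := by gcongr; exact_mod_cast hu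
  have hf := abs_coeff_sqrtPoly_sq_le hM (fun k hk => hp k (by omega)) hi
  rw [coeff_sub]
  linarith [abs_sub (p.coeff i) ((sqrtPoly (fun k => p.coeff (2 * u - k)) u ^ 2).coeff i)]

end Bounds

theorem abs_coeff_prod_X_add_C_le {K ι : Type*} [CommRing K] [LinearOrder K]
    [IsStrictOrderedRing K] (s : Finset ι) (r : ι → K) {J : K} (hr : ∀ i ∈ s, |r i| ≤ J)
    {k : ℕ} (hk : k ≤ #s) :
    |(∏ i ∈ s, (X + C (r i))).coeff (#s - k)| ≤ (#s).choose k * J ^ k := by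
  rw [prod_X_add_C_coeff s r (Nat.sub_le _ _), Nat.sub_sub_self hk]
  calc _ ≤ ∑ t ∈ s.powersetCard k, |∏ i ∈ t, r i| := abs_sum_le_sum_abs _ _
    _ ≤ ∑ t ∈ s.powersetCard k, J ^ k := sum_le_sum fun t ht => by
        rw [mem_powersetCard] at ht
        rw [abs_prod, ← ht.2, ← prod_const]
        exact prod_le_prod (fun _ _ => abs_nonneg _) fun i hi => hr i (ht.1 hi)
    _ = (#s).choose k * J ^ k := by
        rw [sum_const, card_powersetCard, nsmul_eq_mul]

theorem coeff_prod_X_add_natCast_mem_bot {K ι : Type*} [CommRing K] (s : Finset ι)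
    (r : ι → ℕ) (n : ℕ) :
    (∏ i ∈ s, (X + C (r i : K))).coeff n ∈ (⊥ : Subring K) := by
  have hmap : ∏ i ∈ s, (X + C (r i : K)) =
      (∏ i ∈ s, (X + C (r i : ℤ))).map (Int.castRingHom K) := by
    simp [Polynomial.map_prod]
  exact Subring.mem_bot.2 ⟨_, by rw [hmap, coeff_map]; rfl⟩

theorem stmt_18 (u : ℕ) (hu : 2 ≤ u) :
    ∃ J₀ : ℕ, ∀ J : ℕ, J₀ ≤ J →
      ∀ j : Fin (2 * u) → ℕ, StrictMono j →
        j ⟨0, by omega⟩ = 0 → j ⟨2 * u - 1, by omega⟩ = J →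
        ∃ f g : Polynomial ℚ,
          f.Monic ∧ f.natDegree = u ∧ g.degree < (u : WithBot ℕ) ∧
          (∀ i ≤ u,
            |f.coeff i| ≤ (((u - i) ^ (u - i) * (u * J) ^ (u - i) : ℕ) : ℚ) ∧
            ∃ m : ℤ, (4 : ℚ) ^ (u - i) * f.coeff i = (m : ℚ)) ∧
          (∀ i < u,
            |g.coeff i| ≤ ((5 * u ^ (4 * u - 2 * i) * J ^ (2 * u - i) : ℕ) : ℚ)) ∧
          (∏ i, (X + C ((j i : ℚ)))) = f ^ 2 + g := by
  refine ⟨0, fun J _ j hj _ hJ => ?_⟩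
  set p : ℚ[X] := ∏ i, (X + C (j i : ℚ))
  set a : ℕ → ℚ := fun k => p.coeff (2 * u - k)
  have hp_deg : p.natDegree = 2 * u := by
    simp only [p, natDegree_prod_of_monic _ _ fun i _ => monic_X_add_C _, natDegree_X_add_C,
      sum_const, card_univ, Fintype.card_fin, smul_eq_mul, mul_one]
  have hp_monic : p.Monic := monic_prod_of_monic _ _ fun i _ => monic_X_add_C _
  have hp₁ : p.coeff (2 * u) = 1 := by simpa [hp_deg] using hp_monic.coeff_natDegree
  have hjJ : ∀ i ∈ (univ : Finset (Fin (2 * u))), |(j i : ℚ)| ≤ J := fun i _ => by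
    rw [abs_of_nonneg (Nat.cast_nonneg _), ← hJ, Nat.cast_le]
    exact hj.monotone (Fin.le_def.2 (Nat.le_sub_one_of_lt i.isLt))
  have hM : (0 : ℚ) ≤ u * J := by positivity
  have ha (k : ℕ) (hk : k ≤ 2 * u) : |a k| ≤ (2 * (u * J : ℚ)) ^ k :=
    calc |a k| ≤ (2 * u).choose k * (J : ℚ) ^ k := by
          simpa [a, p] using abs_coeff_prod_X_add_C_le univ _ hjJ (k := k) (by simpa using hk)
      _ ≤ (2 * (u * J : ℚ)) ^ k := by
          rw [← mul_assoc, mul_pow]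
          gcongr
          exact_mod_cast Nat.choose_le_pow _ _
  refine ⟨sqrtPoly a u, p - sqrtPoly a u ^ 2, sqrtPoly_monic a u, natDegree_sqrtPoly a u,
    degree_sub_sqrtPoly_sq_lt hp_deg.le hp₁, fun i hi => ⟨?_, ?_⟩, fun i hi => ?_,
    (add_sub_cancel _ _).symm⟩
  · exact_mod_cast abs_coeff_sqrtPoly_le hM (fun k hk => ha k (by omega)) hi
  · obtain ⟨m, hm⟩ := Subring.mem_bot.1 <| four_pow_mul_sqrtCoeff_mem a ⊥
      (fun k => coeff_prod_X_add_natCast_mem_bot univ j _) (u - i)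
    exact ⟨m, by rw [coeff_sqrtPoly, if_pos hi, hm]⟩
  · have hnat : 2 * (u * (u * J)) ^ (2 * u - i) ≤ 5 * u ^ (4 * u - 2 * i) * J ^ (2 * u - i) := by
      rw [mul_pow, mul_pow, ← mul_assoc (u ^ _), ← pow_add,
        show 2 * u - i + (2 * u - i) = 4 * u - 2 * i by omega, mul_assoc 5]
      exact Nat.mul_le_mul_right _ (by norm_num)
    calc _ ≤ 2 * ((u : ℚ) * (u * J)) ^ (2 * u - i) := abs_coeff_sub_sqrtPoly_sq_le hM hu ha hi
      _ ≤ _ := by exact_mod_cast hnat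
end
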